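/- arXiv:2010.12522 — 4 statements merged into one kernel-verified Lean document; each statement's English description precedes it below -/
import Mathlib

section
/- (Vallender formula) Let $X_1$ and $X_2$ be real random variables with finite first moments, laws $P_1,P_2$ and cumulative distribution functions $F_1,F_2$. Then the Wasserstein-1 distance admits the explicit expression $d_W(P_1,P_2)=\int_{\mathbb{R}}|F_1(t)-F_2(t)|\,dt$, i.e. $\sup_{h\ \text{Lipschitz-1}}\left|\mathrm{E}[h(X_1)]-\mathrm{E}[h(X_2)]\right|=\int_{\mathbb{R}}|F_1(t)-F_2(t)|\,dt$. -/
open MeasureTheory Set Filter ENNReal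


namespace Vallender

def Si (t : ℝ) : Set ℝ := if 0 < t then Set.Ici t else ∅
def Ti (t : ℝ) : Set ℝ := if t ≤ 0 then Set.Iio t else ∅

lemma Si_measurable (t : ℝ) : MeasurableSet (Si t) := by
  unfold Si; split_ifs; exacts [measurableSet_Ici, MeasurableSet.empty]

lemma Ti_measurable (t : ℝ) : MeasurableSet (Ti t) := by
  unfold Ti; split_ifs; exacts [measurableSet_Iio, MeasurableSet.empty]

noncomputable def BB (P : Measure ℝ) (t : ℝ) : ℝ := (P (Si t)).toReal - (P (Ti t)).toReal

lemma kernel_eq (x t : ℝ) :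
    (Set.indicator (Set.Ioc 0 x) (fun _ => (1:ℝ)) t) - (Set.indicator (Set.Ioc x 0) (fun _ => (1:ℝ)) t)
      = (Set.indicator (Si t) (fun _ => (1:ℝ)) x) - (Set.indicator (Ti t) (fun _ => (1:ℝ)) x) := by
  unfold Si Ti
  by_cases h1 : 0 < t
  · by_cases h2 : t ≤ x <;>
      simp_all [Set.indicator_apply, Set.mem_Ioc, Set.mem_Ici, Set.mem_Iio, not_le.2 h1,
        le_of_lt h1]
  · push_neg at h1
    by_cases h2 : x < t <;>
      simp_all [Set.indicator_apply, Set.mem_Ioc, Set.mem_Ici, Set.mem_Iio]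

variable {P : Measure ℝ} {g : ℝ → ℝ}

lemma gIoc_integrableOn (hg : Measurable g) (hg1 : ∀ t, |g t| ≤ 1) (a b : ℝ) :
    IntegrableOn g (Set.Ioc a b) volume := by
  apply Measure.integrableOn_of_bounded (M := 1)
  · simp [Real.volume_Ioc]
  · exact hg.aestronglyMeasurable
  · exact ae_of_all _ fun t => by simpa using hg1 t

/-- the product-space integrand -/
noncomputable def FF (g : ℝ → ℝ) (p : ℝ × ℝ) : ℝ :=
  g p.2 * ((Set.indicator (Set.Ioc 0 p.1) (fun _ => (1:ℝ)) p.2)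
    - (Set.indicator (Set.Ioc p.1 0) (fun _ => (1:ℝ)) p.2))

lemma FF_measurable (hg : Measurable g) : Measurable (FF g) := by
  have hA : MeasurableSet {p : ℝ × ℝ | 0 < p.2 ∧ p.2 ≤ p.1} :=
    (measurableSet_lt measurable_const measurable_snd).inter
      (measurableSet_le measurable_snd measurable_fst)
  have hB : MeasurableSet {p : ℝ × ℝ | p.1 < p.2 ∧ p.2 ≤ 0} :=
    (measurableSet_lt measurable_fst measurable_snd).inter
      (measurableSet_le measurable_snd measurable_const)
  have : FF g = fun p => g p.2 *
      (Set.indicator {p : ℝ × ℝ | 0 < p.2 ∧ p.2 ≤ p.1} (fun _ => (1:ℝ)) p -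
       Set.indicator {p : ℝ × ℝ | p.1 < p.2 ∧ p.2 ≤ 0} (fun _ => (1:ℝ)) p) := by
    funext p
    simp only [FF, Set.indicator_apply, Set.mem_Ioc, Set.mem_setOf_eq]
  rw [this]
  exact (hg.comp measurable_snd).mul
    (((measurable_const.indicator hA)).sub ((measurable_const.indicator hB)))

lemma FF_slice_eq (x : ℝ) : (fun t => FF g (x, t)) =
    fun t => (Set.Ioc 0 x).indicator g t - (Set.Ioc x 0).indicator g t := by
  funext t
  simp only [FF, Set.indicator_apply]
  split_ifs <;> ring

lemma FF_slice_integrable (hg : Measurable g) (hg1 : ∀ t, |g t| ≤ 1) (x : ℝ) :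
    Integrable (fun t => FF g (x, t)) volume := by
  rw [FF_slice_eq]
  exact ((gIoc_integrableOn hg hg1 0 x).integrable_indicator measurableSet_Ioc).sub
    ((gIoc_integrableOn hg hg1 x 0).integrable_indicator measurableSet_Ioc)

lemma FF_norm_le (hg1 : ∀ t, |g t| ≤ 1) (x t : ℝ) :
    ‖FF g (x, t)‖ ≤ (Set.uIoc 0 x).indicator (fun _ => (1:ℝ)) t := by
  have h1 := hg1 t
  rcases le_total 0 x with h | h
  · have : Set.Ioc x 0 ⊆ Set.Ioc 0 x := by
      rcases eq_or_lt_of_le h with rfl | h'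
      · exact subset_rfl
      · simp [Set.Ioc_eq_empty (by linarith : ¬ (x < 0))]
    simp only [FF, Set.uIoc_of_le h, Set.indicator_apply]
    split_ifs with h2 h3 h3 <;> simp_all [abs_le] <;> nlinarith [Set.mem_Ioc.1 (this (Set.mem_Ioc.2 h3))]
  · simp only [FF, Set.uIoc, min_eq_left h, max_eq_right h, Set.indicator_apply]
    split_ifs with h2 h3 h3 <;> simp_all [Set.mem_Ioc, abs_le] <;> try linarith

lemma FF_integrable [IsProbabilityMeasure P] (hP : Integrable (fun x : ℝ => x) P)
    (hg : Measurable g) (hg1 : ∀ t, |g t| ≤ 1) :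
    Integrable (FF g) (P.prod volume) := by
  rw [integrable_prod_iff (FF_measurable hg).aestronglyMeasurable]
  refine ⟨ae_of_all _ fun x => FF_slice_integrable hg hg1 x, ?_⟩
  have hmeas : AEStronglyMeasurable (fun x => ∫ t, ‖FF g (x, t)‖) P :=
    (((FF_measurable hg).norm).stronglyMeasurable.integral_prod_right').aestronglyMeasurable
  refine Integrable.mono' (hP.abs) hmeas (ae_of_all _ fun x => ?_)
  have h1 : ∫ t, ‖FF g (x, t)‖ ≤ ∫ t, (Set.uIoc 0 x).indicator (fun _ => (1:ℝ)) t := by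
    apply integral_mono ((FF_slice_integrable hg hg1 x).norm) ?_ (FF_norm_le hg1 x)
    exact (integrable_indicator_iff measurableSet_uIoc).2
      (integrableOn_const (by rw [Set.uIoc, Real.volume_Ioc]; exact ENNReal.ofReal_ne_top))
  have h2 : ∫ t, (Set.uIoc 0 x).indicator (fun _ => (1:ℝ)) t = |x| := by
    rw [integral_indicator_const (1:ℝ) measurableSet_uIoc, Set.uIoc, measureReal_def, Real.volume_Ioc, smul_eq_mul, mul_one,
      ENNReal.toReal_ofReal (by rcases le_total 0 x with h|h <;> simp [*])]
    rcases le_total 0 x with h|h <;>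
      simp [abs_of_nonneg, abs_of_nonpos, *]
  have h3 : (0:ℝ) ≤ ∫ t, ‖FF g (x, t)‖ := integral_nonneg fun t => norm_nonneg _
  rw [Real.norm_of_nonneg h3]
  linarith

end Vallender

namespace Vallender
open scoped Real

lemma lemA {P : Measure ℝ} {g : ℝ → ℝ} [IsProbabilityMeasure P]
    (hP : Integrable (fun x : ℝ => x) P)
    (hg : Measurable g) (hg1 : ∀ t, |g t| ≤ 1) :
    Integrable (fun t => g t * BB P t) volume ∧
      ∫ x, (∫ t in (0:ℝ)..x, g t) ∂P = ∫ t, g t * BB P t := by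
  have hFF := FF_integrable hP hg hg1
  have hright : ∀ t, ∫ x, FF g (x, t) ∂P = g t * BB P t := by
    intro t
    have he : (fun x => FF g (x, t)) = fun x =>
        g t * ((Si t).indicator (fun _ => (1:ℝ)) x - (Ti t).indicator (fun _ => (1:ℝ)) x) := by
      funext x; unfold FF; rw [kernel_eq]
    rw [he, integral_const_mul]
    congr 1
    have iS : Integrable ((Si t).indicator (fun _ => (1:ℝ))) P :=
      (integrable_indicator_iff (Si_measurable t)).2
        (integrableOn_const (measure_ne_top _ _))
    have iT : Integrable ((Ti t).indicator (fun _ => (1:ℝ))) P :=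
      (integrable_indicator_iff (Ti_measurable t)).2
        (integrableOn_const (measure_ne_top _ _))
    rw [integral_sub iS iT, integral_indicator_const (1:ℝ) (Si_measurable t),
      integral_indicator_const (1:ℝ) (Ti_measurable t)]
    simp [BB, measureReal_def]
  have hleft : ∀ x, ∫ t, FF g (x, t) = ∫ t in (0:ℝ)..x, g t := by
    intro x
    rw [FF_slice_eq]
    have i1 := (gIoc_integrableOn hg hg1 0 x).integrable_indicator measurableSet_Ioc
    have i2 := (gIoc_integrableOn hg hg1 x 0).integrable_indicator measurableSet_Ioc
    rw [integral_sub i1 i2, integral_indicator measurableSet_Ioc,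
      integral_indicator measurableSet_Ioc]
    rfl
  constructor
  · have := hFF.integral_prod_right
    refine this.congr (ae_of_all _ fun t => ?_)
    simp only [hright t]
  · have hswap : ∫ x, ∫ t, FF g (x, t) ∂volume ∂P = ∫ t, ∫ x, FF g (x, t) ∂P ∂volume :=
      integral_integral_swap (f := fun x t => FF g (x, t)) hFF
    calc ∫ x, (∫ t in (0:ℝ)..x, g t) ∂P
        = ∫ x, ∫ t, FF g (x, t) ∂volume ∂P := by
          refine integral_congr_ae (ae_of_all _ fun x => ?_); simp only [hleft x]
      _ = ∫ t, ∫ x, FF g (x, t) ∂P ∂volume := hswap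
      _ = ∫ t, g t * BB P t := by
          refine integral_congr_ae (ae_of_all _ fun t => ?_); simp only [hright t]

end Vallender

namespace Vallender

lemma ae_Iio_eq (P : Measure ℝ) [IsProbabilityMeasure P] :
    ∀ᵐ t ∂(volume : Measure ℝ), (P (Set.Iio t)).toReal = (P (Set.Iic t)).toReal := by
  have hcount : Set.Countable {t : ℝ | 0 < P {t}} := by
    apply Measure.countable_meas_pos_of_disjoint_of_meas_iUnion_ne_top (μ := P)
      (As := fun t : ℝ => {t})
    · exact fun t => measurableSet_singleton t
    · exact fun i j hij => by simpa [Set.disjoint_singleton] using hij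
    · rw [Set.iUnion_of_singleton]
      simp
  have hnull : (volume : Measure ℝ) {t : ℝ | 0 < P {t}} = 0 :=
    hcount.measure_zero _
  filter_upwards [measure_eq_zero_iff_ae_notMem.1 hnull] with t ht
  have hsing : P {t} = 0 := by
    by_contra h
    exact ht (pos_iff_ne_zero.2 h)
  have : P (Set.Iic t) = P (Set.Iio t) := by
    rw [← Set.Iio_union_right, measure_union (by simp) (measurableSet_singleton t), hsing,
      add_zero]
  rw [this]

lemma BB_sub (P₁ P₂ : Measure ℝ) [IsProbabilityMeasure P₁] [IsProbabilityMeasure P₂] (t : ℝ) :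
    BB P₁ t - BB P₂ t = (P₂ (Set.Iio t)).toReal - (P₁ (Set.Iio t)).toReal := by
  have key : ∀ (P : Measure ℝ) [IsProbabilityMeasure P],
      (P (Set.Ici t)).toReal = 1 - (P (Set.Iio t)).toReal := by
    intro P hP
    have h1 : P (Set.Ici t) = 1 - P (Set.Iio t) := by
      rw [← Set.compl_Iio]; exact prob_compl_eq_one_sub measurableSet_Iio
    rw [h1, ENNReal.toReal_sub_of_le prob_le_one ENNReal.one_ne_top, ENNReal.toReal_one]
  unfold BB Si Ti
  split_ifs with h1 h2 h2
  · linarith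
  · rw [key P₁, key P₂]; simp only [measure_empty, ENNReal.toReal_zero]; ring
  · simp only [measure_empty, ENNReal.toReal_zero]; ring
  · exact (h2 (le_of_not_gt h1)).elim

lemma lemB {P₁ P₂ : Measure ℝ} [IsProbabilityMeasure P₁] [IsProbabilityMeasure P₂]
    (h₁ : Integrable (fun x : ℝ => x) P₁) (h₂ : Integrable (fun x : ℝ => x) P₂)
    {g : ℝ → ℝ} (hg : Measurable g) (hg1 : ∀ t, |g t| ≤ 1) :
    Integrable (fun t => g t * ((P₂ (Set.Iic t)).toReal - (P₁ (Set.Iic t)).toReal)) volume ∧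
      (∫ x, (∫ t in (0:ℝ)..x, g t) ∂P₁) - (∫ x, (∫ t in (0:ℝ)..x, g t) ∂P₂)
        = ∫ t, g t * ((P₂ (Set.Iic t)).toReal - (P₁ (Set.Iic t)).toReal) := by
  obtain ⟨i1, e1⟩ := lemA h₁ hg hg1
  obtain ⟨i2, e2⟩ := lemA h₂ hg hg1
  have hae : (fun t => g t * (BB P₁ t - BB P₂ t)) =ᵐ[volume]
      (fun t => g t * ((P₂ (Set.Iic t)).toReal - (P₁ (Set.Iic t)).toReal)) := by
    filter_upwards [ae_Iio_eq P₁, ae_Iio_eq P₂] with t ht1 ht2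
    rw [BB_sub P₁ P₂ t, ht1, ht2]
  have isub : Integrable (fun t => g t * (BB P₁ t - BB P₂ t)) volume := by
    have : (fun t => g t * (BB P₁ t - BB P₂ t))
        = fun t => g t * BB P₁ t - g t * BB P₂ t := by funext t; ring
    rw [this]; exact i1.sub i2
  refine ⟨isub.congr hae, ?_⟩
  rw [e1, e2, ← integral_sub i1 i2]
  rw [← integral_congr_ae hae]
  refine integral_congr_ae (ae_of_all _ fun t => ?_)
  ring

end Vallender

namespace Vallender

lemma measurable_sign : Measurable Real.sign := by
  have : Real.sign = fun r : ℝ => if r < 0 then (-1:ℝ) else if 0 < r then 1 else 0 := by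
    funext r; rfl
  rw [this]
  refine Measurable.ite ?_ measurable_const (Measurable.ite ?_ measurable_const measurable_const)
  · exact measurableSet_lt measurable_id measurable_const
  · exact measurableSet_lt measurable_const measurable_id

lemma abs_sign_le (x : ℝ) : |Real.sign x| ≤ 1 := by
  rcases Real.sign_apply_eq x with h | h | h <;> rw [h] <;> norm_num

lemma sign_mul_self (x : ℝ) : Real.sign x * x = |x| := by
  rcases lt_trichotomy x 0 with h | h | h
  · rw [Real.sign_of_neg h, abs_of_neg h]; ring
  · simp [h]
  · rw [Real.sign_of_pos h, abs_of_pos h]; ring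

lemma prim_lipschitz {g : ℝ → ℝ} (hg : Measurable g) (hg1 : ∀ t, |g t| ≤ 1) :
    LipschitzWith 1 (fun x => ∫ t in (0:ℝ)..x, g t) := by
  have hii : ∀ a b : ℝ, IntervalIntegrable g volume a b := fun a b => by
    rw [intervalIntegrable_iff]
    exact gIoc_integrableOn hg hg1 _ _
  apply LipschitzWith.of_dist_le_mul
  intro x y
  rw [Real.dist_eq, Real.dist_eq, NNReal.coe_one, one_mul]
  have : (∫ t in (0:ℝ)..x, g t) - (∫ t in (0:ℝ)..y, g t) = ∫ t in y..x, g t :=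
    intervalIntegral.integral_interval_sub_left (hii 0 x) (hii 0 y)
  rw [this]
  have := intervalIntegral.norm_integral_le_of_norm_le_const
    (f := g) (a := y) (b := x) (C := 1) (fun t _ => by simpa using hg1 t)
  simpa [Real.norm_eq_abs, abs_sub_comm] using this

lemma lipschitz_integrable {P : Measure ℝ} [IsProbabilityMeasure P]
    (hP : Integrable (fun x : ℝ => x) P) {f : ℝ → ℝ} (hf : LipschitzWith 1 f) :
    Integrable f P := by
  refine Integrable.mono' (g := fun x => |x| + |f 0|) (hP.abs.add (integrable_const _))
    hf.continuous.aestronglyMeasurable (ae_of_all _ fun x => ?_)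
  have h1 : |f x - f 0| ≤ |x| := by
    have := hf.dist_le_mul x 0
    simpa [Real.dist_eq] using this
  calc ‖f x‖ = |f x - f 0 + f 0| := by rw [Real.norm_eq_abs]; ring_nf
    _ ≤ |f x - f 0| + |f 0| := abs_add_le _ _
    _ ≤ |x| + |f 0| := by linarith

end Vallender

namespace Vallender
open scoped Convolution

lemma abs_int_le {α : Type*} [MeasurableSpace α] {μ : Measure α} (f : α → ℝ) :
    |∫ x, f x ∂μ| ≤ ∫ x, |f x| ∂μ := by
  simpa [Real.norm_eq_abs] using norm_integral_le_integral_norm (μ := μ) f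

lemma cdf_measurable (P : Measure ℝ) [IsFiniteMeasure P] :
    Measurable (fun t => (P (Set.Iic t)).toReal) := by
  apply Monotone.measurable
  intro a b hab
  exact ENNReal.toReal_mono (measure_ne_top P _) (measure_mono (Set.Iic_subset_Iic.2 hab))

lemma lower {P₁ P₂ : Measure ℝ} [IsProbabilityMeasure P₁] [IsProbabilityMeasure P₂]
    (h₁ : Integrable (fun x : ℝ => x) P₁) (h₂ : Integrable (fun x : ℝ => x) P₂) :
    Integrable (fun t => |(P₁ (Set.Iic t)).toReal - (P₂ (Set.Iic t)).toReal|) volume ∧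
    ∃ h : ℝ → ℝ, LipschitzWith 1 h ∧
      (∫ x, h x ∂P₁) - (∫ x, h x ∂P₂)
        = ∫ t, |(P₁ (Set.Iic t)).toReal - (P₂ (Set.Iic t)).toReal| := by
  set D : ℝ → ℝ := fun t => (P₂ (Set.Iic t)).toReal - (P₁ (Set.Iic t)).toReal with hDdef
  have hD : Measurable D := (cdf_measurable P₂).sub (cdf_measurable P₁)
  set g : ℝ → ℝ := fun t => Real.sign (D t) with hgdef
  have hg : Measurable g := measurable_sign.comp hD
  have hg1 : ∀ t, |g t| ≤ 1 := fun t => abs_sign_le _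
  obtain ⟨iGD, eGD⟩ := lemB h₁ h₂ hg hg1
  have habs : (fun t => g t * D t) = fun t => |(P₁ (Set.Iic t)).toReal - (P₂ (Set.Iic t)).toReal| := by
    funext t
    rw [hgdef]
    simp only
    rw [sign_mul_self (D t), hDdef]
    simp only
    rw [abs_sub_comm]
  refine ⟨habs ▸ iGD, ⟨fun x => ∫ t in (0:ℝ)..x, g t, prim_lipschitz hg hg1, ?_⟩⟩
  rw [eGD, habs]

lemma upper {P₁ P₂ : Measure ℝ} [IsProbabilityMeasure P₁] [IsProbabilityMeasure P₂]
    (h₁ : Integrable (fun x : ℝ => x) P₁) (h₂ : Integrable (fun x : ℝ => x) P₂)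
    {h : ℝ → ℝ} (hh : LipschitzWith 1 h) :
    |(∫ x, h x ∂P₁) - (∫ x, h x ∂P₂)|
      ≤ ∫ t, |(P₁ (Set.Iic t)).toReal - (P₂ (Set.Iic t)).toReal| := by
  have hIabs := (lower h₁ h₂).1
  apply _root_.le_of_forall_pos_le_add
  intro ε hε
  set δ : ℝ := ε / 2 with hδdef
  have hδpos : 0 < δ := by positivity
  set φ : ContDiffBump (0 : ℝ) := ⟨δ/2, δ, by positivity, by linarith⟩ with hφdef
  have hrOut : φ.rOut = δ := rfl
  set φn : ℝ → ℝ := φ.normed volume with hφn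
  set hd : ℝ → ℝ := (φn ⋆[ContinuousLinearMap.lsmul ℝ ℝ, volume] h) with hhd
  -- pointwise formula
  have hconv : ∀ x, hd x = ∫ t, φn t * h (x - t) := by
    intro x
    rw [hhd, convolution_def]
    simp only [ContinuousLinearMap.lsmul_apply, smul_eq_mul]
  have hint : ∀ x : ℝ, Integrable (fun t => φn t * h (x - t)) volume := by
    intro x
    apply Continuous.integrable_of_hasCompactSupport
    · exact (φ.continuous_normed).mul (hh.continuous.comp (continuous_const.sub continuous_id))
    · exact (φ.hasCompactSupport_normed).mul_right
  -- hd is 1-Lipschitz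
  have hdlip : LipschitzWith 1 hd := by
    apply LipschitzWith.of_dist_le_mul
    intro x y
    rw [Real.dist_eq, Real.dist_eq, NNReal.coe_one, one_mul]
    have hsub : hd x - hd y = ∫ t, (φn t * h (x - t) - φn t * h (y - t)) := by
      rw [hconv x, hconv y, integral_sub (hint x) (hint y)]
    rw [hsub]
    have hb : ∀ t, |φn t * h (x - t) - φn t * h (y - t)| ≤ φn t * |x - y| := by
      intro t
      rw [← mul_sub, abs_mul, abs_of_nonneg (φ.nonneg_normed t)]
      refine mul_le_mul_of_nonneg_left ?_ (φ.nonneg_normed t)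
      have := hh.dist_le_mul (x - t) (y - t)
      rw [Real.dist_eq, Real.dist_eq, sub_sub_sub_cancel_right, NNReal.coe_one, one_mul] at this
      exact this
    calc |∫ t, (φn t * h (x - t) - φn t * h (y - t))|
        ≤ ∫ t, |φn t * h (x - t) - φn t * h (y - t)| := abs_int_le _
      _ ≤ ∫ t, φn t * |x - y| := by
          refine integral_mono ((hint x).sub (hint y)).abs (φ.integrable_normed.mul_const _) hb
      _ = |x - y| := by rw [integral_mul_const, φ.integral_normed, one_mul]
  -- hd is close to h
  have hclose : ∀ x, |hd x - h x| ≤ δ := by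
    intro x
    have := φ.dist_normed_convolution_le (μ := volume) (x₀ := x) hh.continuous.aestronglyMeasurable
      (fun y hy => by
        have := hh.dist_le_mul y x
        rw [NNReal.coe_one, one_mul] at this
        exact this.trans (le_of_lt (by simpa [hrOut] using hy)))
    rw [Real.dist_eq] at this
    exact this
  -- hd is smooth
  have hdsmooth : ContDiff ℝ 1 hd :=
    (φ.hasCompactSupport_normed).contDiff_convolution_left _ φ.contDiff_normed
      (hh.continuous.locallyIntegrable)
  have hddiff : Differentiable ℝ hd := hdsmooth.differentiable one_ne_zero
  set g : ℝ → ℝ := deriv hd with hgdef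
  have hgcont : Continuous g := hdsmooth.continuous_deriv le_rfl
  have hg : Measurable g := hgcont.measurable
  have hg1 : ∀ t, |g t| ≤ 1 := by
    intro t
    have := norm_deriv_le_of_lipschitz (𝕜 := ℝ) hdlip (x₀ := t)
    simpa using this
  -- FTC
  have hftc : ∀ x, ∫ t in (0:ℝ)..x, g t = hd x - hd 0 := by
    intro x
    exact intervalIntegral.integral_deriv_eq_sub (fun y _ => hddiff y)
      ((hgcont.intervalIntegrable) 0 x)
  obtain ⟨iGD, eGD⟩ := lemB h₁ h₂ hg hg1
  -- rewrite the lemB LHS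
  have hint_hd : ∀ (P : Measure ℝ) [IsProbabilityMeasure P], Integrable hd P →
      ∫ x, (∫ t in (0:ℝ)..x, g t) ∂P = (∫ x, hd x ∂P) - hd 0 := by
    intro P _ hI
    have : ∫ x, (∫ t in (0:ℝ)..x, g t) ∂P = ∫ x, (hd x - hd 0) ∂P := by
      refine integral_congr_ae (ae_of_all _ fun x => ?_)
      simp only [hftc x]
    rw [this, integral_sub hI (integrable_const _), integral_const]
    simp
  have ihd1 : Integrable hd P₁ := lipschitz_integrable h₁ hdlip
  have ihd2 : Integrable hd P₂ := lipschitz_integrable h₂ hdlip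
  have hdiff_eq : (∫ x, hd x ∂P₁) - (∫ x, hd x ∂P₂)
      = ∫ t, g t * ((P₂ (Set.Iic t)).toReal - (P₁ (Set.Iic t)).toReal) := by
    rw [← eGD, hint_hd P₁ ihd1, hint_hd P₂ ihd2]
    ring
  -- bound the middle term
  have hmid : |(∫ x, hd x ∂P₁) - (∫ x, hd x ∂P₂)|
      ≤ ∫ t, |(P₁ (Set.Iic t)).toReal - (P₂ (Set.Iic t)).toReal| := by
    rw [hdiff_eq]
    calc |∫ t, g t * ((P₂ (Set.Iic t)).toReal - (P₁ (Set.Iic t)).toReal)|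
        ≤ ∫ t, |g t * ((P₂ (Set.Iic t)).toReal - (P₁ (Set.Iic t)).toReal)| :=
          abs_int_le _
      _ ≤ ∫ t, |(P₁ (Set.Iic t)).toReal - (P₂ (Set.Iic t)).toReal| := by
          refine integral_mono iGD.abs hIabs fun t => ?_
          rw [abs_mul, abs_sub_comm]
          calc |g t| * |(P₁ (Set.Iic t)).toReal - (P₂ (Set.Iic t)).toReal|
              ≤ 1 * |(P₁ (Set.Iic t)).toReal - (P₂ (Set.Iic t)).toReal| :=
                mul_le_mul_of_nonneg_right (hg1 t) (abs_nonneg _)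
            _ = _ := one_mul _
  -- error terms
  have herr : ∀ (P : Measure ℝ) [IsProbabilityMeasure P], Integrable (fun x : ℝ => x) P →
      Integrable hd P → |(∫ x, h x ∂P) - (∫ x, hd x ∂P)| ≤ δ := by
    intro P _ hP hI
    have ih : Integrable h P := lipschitz_integrable hP hh
    rw [← integral_sub ih hI]
    calc |∫ x, (h x - hd x) ∂P| ≤ ∫ x, |h x - hd x| ∂P := abs_int_le _
      _ ≤ ∫ _x, δ ∂P := by
          refine integral_mono (ih.sub hI).abs (integrable_const _) fun x => ?_
          rw [abs_sub_comm]
          exact hclose x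
      _ = δ := by simp
  have e1 := herr P₁ h₁ ihd1
  have e2 := herr P₂ h₂ ihd2
  have : |(∫ x, h x ∂P₁) - (∫ x, h x ∂P₂)|
      ≤ |(∫ x, hd x ∂P₁) - (∫ x, hd x ∂P₂)| + δ + δ := by
    have t1 := abs_sub_abs_le_abs_sub ((∫ x, h x ∂P₁) - (∫ x, h x ∂P₂))
      ((∫ x, hd x ∂P₁) - (∫ x, hd x ∂P₂))
    have t2 : |((∫ x, h x ∂P₁) - (∫ x, h x ∂P₂)) - ((∫ x, hd x ∂P₁) - (∫ x, hd x ∂P₂))|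
        ≤ δ + δ := by
      have hre : ((∫ x, h x ∂P₁) - (∫ x, h x ∂P₂)) - ((∫ x, hd x ∂P₁) - (∫ x, hd x ∂P₂))
          = ((∫ x, h x ∂P₁) - (∫ x, hd x ∂P₁)) - ((∫ x, h x ∂P₂) - (∫ x, hd x ∂P₂)) := by ring
      rw [hre]
      calc |((∫ x, h x ∂P₁) - (∫ x, hd x ∂P₁)) - ((∫ x, h x ∂P₂) - (∫ x, hd x ∂P₂))|
          ≤ |(∫ x, h x ∂P₁) - (∫ x, hd x ∂P₁)| + |(∫ x, h x ∂P₂) - (∫ x, hd x ∂P₂)| :=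
            abs_sub _ _
        _ ≤ δ + δ := add_le_add e1 e2
    have := abs_sub_abs_le_abs_sub ((∫ x, h x ∂P₁) - (∫ x, h x ∂P₂))
      ((∫ x, hd x ∂P₁) - (∫ x, hd x ∂P₂))
    calc |(∫ x, h x ∂P₁) - (∫ x, h x ∂P₂)|
        ≤ |(∫ x, hd x ∂P₁) - (∫ x, hd x ∂P₂)|
          + |((∫ x, h x ∂P₁) - (∫ x, h x ∂P₂)) - ((∫ x, hd x ∂P₁) - (∫ x, hd x ∂P₂))| := by
          have := abs_sub_abs_le_abs_sub ((∫ x, h x ∂P₁) - (∫ x, h x ∂P₂))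
            ((∫ x, hd x ∂P₁) - (∫ x, hd x ∂P₂))
          linarith [abs_sub_abs_le_abs_sub ((∫ x, h x ∂P₁) - (∫ x, h x ∂P₂))
            ((∫ x, hd x ∂P₁) - (∫ x, hd x ∂P₂))]
      _ ≤ |(∫ x, hd x ∂P₁) - (∫ x, hd x ∂P₂)| + (δ + δ) := by linarith
      _ = _ := by ring
  have hfin : δ + δ = ε := by rw [hδdef]; ring
  linarith [hmid]

end Vallender

/-- The Wasserstein-1 distance between two probability measures on `ℝ`, via the dual
representation as a supremum over Lipschitz-1 test functions. -/
noncomputable def wassersteinDist (P Q : Measure ℝ) : ℝ≥0∞ :=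
  ⨆ (h : ℝ → ℝ) (_ : LipschitzWith 1 h),
    ENNReal.ofReal |(∫ x, h x ∂P) - (∫ x, h x ∂Q)|

/-- Vallender's formula: for real random variables with finite first moments, the
Wasserstein-1 distance equals the `L¹` distance between the cumulative distribution
functions: `d_W(P₁,P₂) = ∫ |F₁(t) - F₂(t)| dt`. -/
theorem vallender_formula
    (P₁ P₂ : Measure ℝ) [IsProbabilityMeasure P₁] [IsProbabilityMeasure P₂]
    (h₁ : Integrable (fun x : ℝ => x) P₁)
    (h₂ : Integrable (fun x : ℝ => x) P₂) :
    wassersteinDist P₁ P₂ =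
      ENNReal.ofReal
        (∫ t : ℝ, |(P₁ (Set.Iic t)).toReal - (P₂ (Set.Iic t)).toReal|) := by
  obtain ⟨hIabs, h0, hlip0, heq0⟩ := Vallender.lower h₁ h₂
  apply le_antisymm
  · refine iSup_le fun h => iSup_le fun hlip => ?_
    exact ENNReal.ofReal_le_ofReal (Vallender.upper h₁ h₂ hlip)
  · have hnn : 0 ≤ ∫ t : ℝ, |(P₁ (Set.Iic t)).toReal - (P₂ (Set.Iic t)).toReal| :=
      integral_nonneg fun t => abs_nonneg _
    have hre : ENNReal.ofReal (∫ t : ℝ, |(P₁ (Set.Iic t)).toReal - (P₂ (Set.Iic t)).toReal|)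
        = ENNReal.ofReal |(∫ x, h0 x ∂P₁) - (∫ x, h0 x ∂P₂)| := by
      rw [heq0, abs_of_nonneg (heq0 ▸ hnn)]
    rw [hre]
    exact le_iSup₂ (f := fun (h : ℝ → ℝ) (_ : LipschitzWith 1 h) =>
      ENNReal.ofReal |(∫ x, h x ∂P₁) - (∫ x, h x ∂P₂)|) h0 hlip0
end

section
/- (Exact Wasserstein distance between Gamma posteriors in the Poisson model) Fix $n\in\mathbb{N}$, nonnegative integer data $x_1,\dots,x_n$ with sum $S=\sum_{i=1}^n x_i$, and two Gamma priors with parameters $(\alpha_1,\beta_1)$ and $(\alpha_2,\beta_2)$, $\alpha_i>0$, $\beta_i\ge 0$. The corresponding posteriors for the Poisson rate $\theta$ are $P_1=\mathrm{Gamma}(\alpha_1+S,\,\beta_1+n)$ and $P_2=\mathrm{Gamma}(\alpha_2+S,\,\beta_2+n)$ (shape–rate parametrization). If either ($\alpha_1<\alpha_2$ and $\beta_1>\beta_2$) or ($\alpha_1>\alpha_2$ and $\beta_1<\beta_2$), then the Wasserstein-1 distance between the two posteriors equals $d_W(P_1,P_2)=\dfrac{1}{n+\beta_1}\left|\alpha_2-\alpha_1-(\beta_2-\beta_1)\dfrac{\alpha_2+S}{n+\beta_2}\right|$.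 -/
open MeasureTheory Set Filter ENNReal ProbabilityTheory

section WassersteinAux

open Real

lemma gamma_Iic_zero (a r : ℝ) : gammaMeasure a r (Iic 0) = 0 := by
  rw [gammaMeasure, withDensity_apply _ measurableSet_Iic]
  have : (Iic (0:ℝ)) = Iio 0 ∪ {0} := by ext y; simp [le_iff_lt_or_eq]
  rw [this, lintegral_union (measurableSet_singleton 0)]
  · rw [lintegral_gammaPDF_of_nonpos le_rfl]
    simp [Measure.restrict_singleton]
  · simp only [Set.disjoint_left, mem_Iio, mem_singleton_iff]
    exact fun a h => ne_of_lt h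

lemma gamma_singleton (a r x : ℝ) : gammaMeasure a r {x} = 0 :=
  withDensity_absolutelyContinuous _ _ (by simp)

lemma gamma_Ioi (a r x : ℝ) : gammaMeasure a r (Ioi x) = ∫⁻ t in Ioi x, gammaPDF a r t := by
  rw [gammaMeasure, withDensity_apply _ measurableSet_Ioi]

lemma gamma_ae_nonneg (a r : ℝ) : ∀ᵐ t ∂(gammaMeasure a r), 0 ≤ t := by
  rw [ae_iff]
  refine measure_mono_null ?_ (gamma_Iic_zero a r)
  intro t ht; simpa using le_of_lt (not_le.mp ht)

lemma gamma_ae_pos (a r : ℝ) : ∀ᵐ t ∂(gammaMeasure a r), 0 < t := by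
  rw [ae_iff]
  refine measure_mono_null ?_ (gamma_Iic_zero a r)
  intro t ht; simpa using le_of_not_gt ht

/-- first moment via lintegral -/
lemma gamma_lintegral_id (a r : ℝ) (ha : 0 < a) (hr : 0 < r) :
    ∫⁻ t, ENNReal.ofReal t ∂(gammaMeasure a r) = ENNReal.ofReal (a / r) := by
  rw [gammaMeasure, lintegral_withDensity_eq_lintegral_mul _
      (show Measurable (gammaPDF a r) from (measurable_gammaPDFReal a r).ennreal_ofReal)
      measurable_id'.ennreal_ofReal]
  have key : ∀ᵐ t, (gammaPDF a r * fun t => ENNReal.ofReal t) t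
      = ENNReal.ofReal (a/r) * gammaPDF (a+1) r t := by
    filter_upwards [compl_mem_ae_iff.mpr (show volume ({0}:Set ℝ) = 0 by simp)] with t ht
    rcases lt_trichotomy t 0 with h | h | h
    · simp [gammaPDF_of_neg h, Pi.mul_apply]
    · exact absurd h ht
    · rw [Pi.mul_apply, gammaPDF_of_nonneg h.le, gammaPDF_of_nonneg h.le,
        ← ENNReal.ofReal_mul (by positivity), ← ENNReal.ofReal_mul (by positivity)]
      congr 1
      rw [Real.Gamma_add_one ha.ne', Real.rpow_add hr, Real.rpow_one]
      have h1 : t ^ (a + 1 - 1) = t ^ (a-1) * t := by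
        rw [show a+1-1 = (a-1)+1 by ring, Real.rpow_add h, Real.rpow_one]
      rw [h1]
      field_simp
  rw [lintegral_congr_ae key, lintegral_const_mul _
    (by exact (measurable_gammaPDFReal _ r).ennreal_ofReal),
    lintegral_gammaPDF_eq_one (by linarith) hr, mul_one]

variable {a r : ℝ}

lemma gamma_integrable_id (ha : 0 < a) (hr : 0 < r)
    (hnn : ∀ᵐ t ∂(gammaMeasure a r), 0 ≤ t)
    (hli : ∫⁻ t, ENNReal.ofReal t ∂(gammaMeasure a r) = ENNReal.ofReal (a / r)) :
    Integrable (fun t => t) (gammaMeasure a r) := by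
  refine ⟨measurable_id.aestronglyMeasurable, ?_⟩
  rw [HasFiniteIntegral]
  have : ∀ᵐ t ∂(gammaMeasure a r), ‖t‖ₑ = ENNReal.ofReal t := by
    filter_upwards [hnn] with t ht
    exact Real.enorm_eq_ofReal ht
  rw [lintegral_congr_ae this, hli]
  exact ofReal_lt_top

lemma gamma_integral_id (ha : 0 < a) (hr : 0 < r)
    (hnn : ∀ᵐ t ∂(gammaMeasure a r), 0 ≤ t)
    (hli : ∫⁻ t, ENNReal.ofReal t ∂(gammaMeasure a r) = ENNReal.ofReal (a / r)) :
    ∫ t, t ∂(gammaMeasure a r) = a / r := by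
  rw [integral_eq_lintegral_of_nonneg_ae hnn measurable_id.aestronglyMeasurable, hli,
    ENNReal.toReal_ofReal (by positivity)]

lemma lipschitz_integrable {h : ℝ → ℝ} (hl : LipschitzWith 1 h)
    (hid : Integrable (fun t => t) (gammaMeasure a r)) [IsFiniteMeasure (gammaMeasure a r)] :
    Integrable h (gammaMeasure a r) := by
  refine Integrable.mono' ((integrable_const |h 0|).add hid.abs)
    hl.continuous.aestronglyMeasurable ?_
  filter_upwards with t
  calc ‖h t‖ = |h t - h 0 + h 0| := by rw [Real.norm_eq_abs]; ring_nf
  _ ≤ |h t - h 0| + |h 0| := abs_add_le _ _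
  _ ≤ |t - 0| + |h 0| := by
      have := hl.dist_le_mul t 0
      simp only [NNReal.coe_one, one_mul, Real.dist_eq] at this
      linarith [this]
  _ = |h 0| + |t| := by rw [sub_zero]; ring



/-- Single-crossing of densities implies ordering of upper-tail probabilities. -/
lemma tail_le_of_crossing {a₁ r₁ a₂ r₂ : ℝ} (ha₁ : 0 < a₁) (hr₁ : 0 < r₁)
    (ha₂ : 0 < a₂) (hr₂ : 0 < r₂) (c : ℝ)
    (h₁ : ∀ t, 0 < t → t ≤ c → gammaPDFReal a₂ r₂ t ≤ gammaPDFReal a₁ r₁ t)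
    (h₂ : ∀ t, c ≤ t → gammaPDFReal a₁ r₁ t ≤ gammaPDFReal a₂ r₂ t)
    (x : ℝ) : gammaMeasure a₁ r₁ (Ioi x) ≤ gammaMeasure a₂ r₂ (Ioi x) := by
  have P1 := isProbabilityMeasure_gammaMeasure ha₁ hr₁
  have P2 := isProbabilityMeasure_gammaMeasure ha₂ hr₂
  rcases le_or_gt c x with hcx | hxc
  · -- compare densities pointwise on Ioi x
    rw [gammaMeasure, gammaMeasure, withDensity_apply _ measurableSet_Ioi,
      withDensity_apply _ measurableSet_Ioi]
    refine setLIntegral_mono (measurable_gammaPDFReal a₂ r₂).ennreal_ofReal fun t ht => ?_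
    exact ENNReal.ofReal_le_ofReal (h₂ t (le_trans hcx (le_of_lt ht)))
  · -- compare CDFs
    have key : gammaMeasure a₂ r₂ (Iic x) ≤ gammaMeasure a₁ r₁ (Iic x) := by
      rcases le_or_gt x 0 with hx0 | hx0
      · rw [measure_mono_null (Iic_subset_Iic.mpr hx0) (gamma_Iic_zero a₂ r₂)]
        exact zero_le
      · have hdecomp : ∀ a r : ℝ, gammaMeasure a r (Iic x) = gammaMeasure a r (Ioc 0 x) := by
          intro a r
          have hu : (Iic x) = Iic 0 ∪ Ioc 0 x := (Iic_union_Ioc_eq_Iic hx0.le).symm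
          rw [hu, measure_union (Iic_disjoint_Ioc le_rfl) measurableSet_Ioc,
            gamma_Iic_zero, zero_add]
        rw [hdecomp, hdecomp, gammaMeasure, gammaMeasure,
          withDensity_apply _ measurableSet_Ioc, withDensity_apply _ measurableSet_Ioc]
        refine setLIntegral_mono (measurable_gammaPDFReal a₁ r₁).ennreal_ofReal fun t ht => ?_
        exact ENNReal.ofReal_le_ofReal (h₁ t ht.1 (le_trans ht.2 hxc.le))
    have h1 : gammaMeasure a₁ r₁ (Ioi x) = 1 - gammaMeasure a₁ r₁ (Iic x) := by
      rw [← compl_Iic, measure_compl measurableSet_Iic (measure_ne_top _ _), measure_univ]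
    have h2 : gammaMeasure a₂ r₂ (Ioi x) = 1 - gammaMeasure a₂ r₂ (Iic x) := by
      rw [← compl_Iic, measure_compl measurableSet_Iic (measure_ne_top _ _), measure_univ]
    rw [h1, h2]
    exact tsub_le_tsub_left key 1



lemma pdf_exp_form {a r t : ℝ} (ha : 0 < a) (hr : 0 < r) (ht : 0 < t) :
    gammaPDFReal a r t = exp (a * log r - log (Gamma a) + (a-1) * log t - r * t) := by
  rw [gammaPDFReal, if_pos ht.le, Real.rpow_def_of_pos hr, Real.rpow_def_of_pos ht,
    show a * log r - log (Gamma a) + (a-1) * log t - r * t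
      = (log r * a) + (-(log (Gamma a))) + (log t * (a-1)) + (-(r*t)) by ring,
    Real.exp_add, Real.exp_add, Real.exp_add, Real.exp_neg, Real.exp_neg,
    Real.exp_log (Real.Gamma_pos_of_pos ha)]
  ring

lemma pdf_le_pdf_iff {a₁ r₁ a₂ r₂ t : ℝ} (ha₁ : 0 < a₁) (hr₁ : 0 < r₁)
    (ha₂ : 0 < a₂) (hr₂ : 0 < r₂) (ht : 0 < t) :
    gammaPDFReal a₂ r₂ t ≤ gammaPDFReal a₁ r₁ t ↔
      (a₂ - a₁) * log t + (r₁ - r₂) * t ≤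
        (a₁ * log r₁ - log (Gamma a₁)) - (a₂ * log r₂ - log (Gamma a₂)) := by
  rw [pdf_exp_form ha₁ hr₁ ht, pdf_exp_form ha₂ hr₂ ht, Real.exp_le_exp]
  constructor <;> intro <;> linarith


/-- Stochastic dominance of gamma measures: larger shape, smaller rate ⇒ larger tails. -/
lemma gamma_tail_mono {a₁ r₁ a₂ r₂ : ℝ} (ha₁ : 0 < a₁) (hr₁ : 0 < r₁)
    (ha₂ : 0 < a₂) (hr₂ : 0 < r₂) (haa : a₁ < a₂) (hrr : r₂ < r₁) (x : ℝ) :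
    gammaMeasure a₁ r₁ (Ioi x) ≤ gammaMeasure a₂ r₂ (Ioi x) := by
  have hlog : log r₂ < log r₁ := Real.log_lt_log hr₂ hrr
  -- step 1 : rate
  have step1 : gammaMeasure a₁ r₁ (Ioi x) ≤ gammaMeasure a₁ r₂ (Ioi x) := by
    set K := a₁ * log r₁ - a₁ * log r₂ with hK
    have hKpos : 0 < K := by have := mul_lt_mul_of_pos_left hlog ha₁; simpa [hK] using by nlinarith
    refine tail_le_of_crossing ha₁ hr₁ ha₁ hr₂ (K / (r₁ - r₂)) (fun t ht htc => ?_)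
      (fun t htc => ?_) x
    · rw [pdf_le_pdf_iff ha₁ hr₁ ha₁ hr₂ ht]
      have : t * (r₁ - r₂) ≤ K := (le_div_iff₀ (by linarith)).mp htc
      nlinarith
    · have ht : 0 < t := lt_of_lt_of_le (div_pos hKpos (by linarith)) htc
      rw [pdf_le_pdf_iff ha₁ hr₂ ha₁ hr₁ ht]
      have : K ≤ t * (r₁ - r₂) := (div_le_iff₀ (by linarith)).mp htc
      nlinarith
  -- step 2 : shape
  have step2 : gammaMeasure a₁ r₂ (Ioi x) ≤ gammaMeasure a₂ r₂ (Ioi x) := by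
    set K := (a₁ * log r₂ - log (Gamma a₁)) - (a₂ * log r₂ - log (Gamma a₂)) with hK
    refine tail_le_of_crossing ha₁ hr₂ ha₂ hr₂ (exp (K / (a₂ - a₁))) (fun t ht htc => ?_)
      (fun t htc => ?_) x
    · rw [pdf_le_pdf_iff ha₁ hr₂ ha₂ hr₂ ht]
      have h2 : log t ≤ K / (a₂ - a₁) := (Real.log_le_iff_le_exp ht).mpr htc
      have h3 : (a₂ - a₁) * log t ≤ K := by
        rw [mul_comm]; exact (le_div_iff₀ (by linarith)).mp h2
      linarith
    · have ht : 0 < t := lt_of_lt_of_le (Real.exp_pos _) htc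
      rw [pdf_le_pdf_iff ha₂ hr₂ ha₁ hr₂ ht]
      have h2 : K / (a₂ - a₁) ≤ log t := (Real.le_log_iff_exp_le ht).mpr htc
      have h3 : K ≤ (a₂ - a₁) * log t := by
        rw [mul_comm]; exact (div_le_iff₀ (by linarith)).mp h2
      linarith
  exact le_trans step1 step2

lemma meas_upper_le {μ₁ μ₂ : Measure ℝ} [IsProbabilityMeasure μ₁] [IsProbabilityMeasure μ₂]
    (hs₁ : ∀ u : ℝ, μ₁ {u} = 0)
    (htail : ∀ s : ℝ, μ₁ (Ioi s) ≤ μ₂ (Ioi s))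
    (U : Set ℝ) (hU : ∀ ⦃a b : ℝ⦄, a ∈ U → a ≤ b → b ∈ U) : μ₁ U ≤ μ₂ U := by
  rcases eq_empty_or_nonempty U with rfl | ⟨a₀, ha₀⟩
  · simp
  by_cases huniv : U = univ
  · subst huniv; simp
  obtain ⟨u₀, hu₀⟩ : ∃ u₀, u₀ ∉ U := by
    by_contra hc; push_neg at hc; exact huniv (eq_univ_of_forall hc)
  have hbdd : ∀ a ∈ U, u₀ ≤ a := by
    intro a ha
    by_contra hlt
    exact hu₀ (hU ha (le_of_not_ge hlt))
  set u := sInf U with hu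
  have hBdd : BddBelow U := ⟨u₀, hbdd⟩
  have hsub1 : Ioi u ⊆ U := by
    intro v hv
    obtain ⟨a, haU, hav⟩ := exists_lt_of_csInf_lt ⟨a₀, ha₀⟩ hv
    exact hU haU hav.le
  have hsub2 : U ⊆ Ici u := fun a ha => csInf_le hBdd ha
  calc μ₁ U ≤ μ₁ (Ici u) := measure_mono hsub2
    _ ≤ μ₁ {u} + μ₁ (Ioi u) := by
        rw [show Ici u = {u} ∪ Ioi u by ext y; simp [le_iff_lt_or_eq, or_comm, eq_comm]]
        exact measure_union_le _ _
    _ = μ₁ (Ioi u) := by rw [hs₁ u, zero_add]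
    _ ≤ μ₂ (Ioi u) := htail u
    _ ≤ μ₂ U := measure_mono hsub1

/-- Monotone integrands integrate monotonically under tail domination. -/
lemma integral_mono_of_tail_le {μ₁ μ₂ : Measure ℝ}
    [IsProbabilityMeasure μ₁] [IsProbabilityMeasure μ₂]
    (hs₁ : ∀ u : ℝ, μ₁ {u} = 0)
    (htail : ∀ s : ℝ, μ₁ (Ioi s) ≤ μ₂ (Ioi s))
    (hnn₁ : ∀ᵐ t ∂μ₁, 0 ≤ t) (hnn₂ : ∀ᵐ t ∂μ₂, 0 ≤ t)
    {g : ℝ → ℝ} (hg : Monotone g) (hg₁ : Integrable g μ₁) (hg₂ : Integrable g μ₂) :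
    ∫ t, g t ∂μ₁ ≤ ∫ t, g t ∂μ₂ := by
  set g' : ℝ → ℝ := fun t => g t - g 0 with hg'
  have hg'mono : Monotone g' := fun s t hst => by
    simp only [hg']; linarith [hg hst]
  have hint : ∀ (μ : Measure ℝ) [IsProbabilityMeasure μ], Integrable g μ →
      ∫ t, g t ∂μ = (∫ t, g' t ∂μ) + g 0 := by
    intro μ _ hgi
    rw [hg']
    rw [integral_sub hgi (integrable_const _), integral_const]
    simp
  rw [hint μ₁ hg₁, hint μ₂ hg₂]
  gcongr ?_ + _
  have hnn' : ∀ (μ : Measure ℝ), (∀ᵐ t ∂μ, 0 ≤ t) → 0 ≤ᵐ[μ] g' := by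
    intro μ h
    filter_upwards [h] with t ht
    simpa [hg'] using hg ht
  have hmeas : Measurable g' := (hg.measurable).sub measurable_const
  rw [integral_eq_lintegral_of_nonneg_ae (hnn' μ₁ hnn₁) hmeas.aestronglyMeasurable,
      integral_eq_lintegral_of_nonneg_ae (hnn' μ₂ hnn₂) hmeas.aestronglyMeasurable]
  have hfin : ∀ (μ : Measure ℝ) [IsProbabilityMeasure μ], Integrable g μ →
      ∫⁻ t, ENNReal.ofReal (g' t) ∂μ ≠ ∞ := by
    intro μ _ hgi
    exact (Integrable.lintegral_lt_top (hgi.sub (integrable_const _))).ne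
  refine ENNReal.toReal_mono (hfin μ₂ hg₂) ?_
  rw [lintegral_eq_lintegral_meas_lt μ₁ (hnn' μ₁ hnn₁) hmeas.aemeasurable,
      lintegral_eq_lintegral_meas_lt μ₂ (hnn' μ₂ hnn₂) hmeas.aemeasurable]
  refine lintegral_mono fun t => ?_
  refine meas_upper_le hs₁ htail _ fun a b ha hab => ?_
  exact lt_of_lt_of_le ha (hg'mono hab)

lemma wassersteinDist_comm (P Q : Measure ℝ) : wassersteinDist P Q = wassersteinDist Q P := by
  unfold wassersteinDist
  refine iSup_congr fun h => iSup_congr fun _ => ?_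
  rw [abs_sub_comm]

/-- Main lemma: under strict stochastic dominance, the Wasserstein distance between
gamma measures is the difference of their means. -/
lemma wassersteinDist_gamma_eq {a₁ r₁ a₂ r₂ : ℝ} (ha₁ : 0 < a₁) (hr₁ : 0 < r₁)
    (ha₂ : 0 < a₂) (hr₂ : 0 < r₂) (haa : a₁ < a₂) (hrr : r₂ < r₁) :
    wassersteinDist (gammaMeasure a₁ r₁) (gammaMeasure a₂ r₂)
      = ENNReal.ofReal (a₂ / r₂ - a₁ / r₁) := by
  have P1 : IsProbabilityMeasure (gammaMeasure a₁ r₁) := isProbabilityMeasure_gammaMeasure ha₁ hr₁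
  have P2 : IsProbabilityMeasure (gammaMeasure a₂ r₂) := isProbabilityMeasure_gammaMeasure ha₂ hr₂
  have hm : a₁ / r₁ ≤ a₂ / r₂ := div_le_div₀ ha₂.le haa.le hr₂ hrr.le
  have hid₁ : Integrable (fun t => t) (gammaMeasure a₁ r₁) :=
    gamma_integrable_id ha₁ hr₁ (gamma_ae_nonneg _ _) (gamma_lintegral_id _ _ ha₁ hr₁)
  have hid₂ : Integrable (fun t => t) (gammaMeasure a₂ r₂) :=
    gamma_integrable_id ha₂ hr₂ (gamma_ae_nonneg _ _) (gamma_lintegral_id _ _ ha₂ hr₂)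
  have hI₁ : ∫ t, t ∂(gammaMeasure a₁ r₁) = a₁ / r₁ :=
    gamma_integral_id ha₁ hr₁ (gamma_ae_nonneg _ _) (gamma_lintegral_id _ _ ha₁ hr₁)
  have hI₂ : ∫ t, t ∂(gammaMeasure a₂ r₂) = a₂ / r₂ :=
    gamma_integral_id ha₂ hr₂ (gamma_ae_nonneg _ _) (gamma_lintegral_id _ _ ha₂ hr₂)
  have htail := gamma_tail_mono ha₁ hr₁ ha₂ hr₂ haa hrr
  apply le_antisymm
  · refine iSup₂_le fun h hl => ENNReal.ofReal_le_ofReal ?_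
    have hint₁ : Integrable h (gammaMeasure a₁ r₁) := lipschitz_integrable hl hid₁
    have hint₂ : Integrable h (gammaMeasure a₂ r₂) := lipschitz_integrable hl hid₂
    have key : ∀ s t : ℝ, s ≤ t → |h s - h t| ≤ t - s := by
      intro s t hst
      have h1 := hl.dist_le_mul s t
      simp only [NNReal.coe_one, one_mul, Real.dist_eq] at h1
      calc |h s - h t| ≤ |s - t| := h1
        _ = t - s := by rw [abs_sub_comm, abs_of_nonneg (by linarith)]
    have hmono_add : Monotone (fun t => t + h t) := by
      intro s t hst
      have h2 := abs_le.mp (key s t hst)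
      simp only
      linarith [h2.1]
    have hmono_sub : Monotone (fun t => t - h t) := by
      intro s t hst
      have h2 := abs_le.mp (key s t hst)
      simp only
      linarith [h2.2]
    have hA := integral_mono_of_tail_le (gamma_singleton a₁ r₁) htail
      (gamma_ae_nonneg _ _) (gamma_ae_nonneg _ _) hmono_add
      (hid₁.add hint₁) (hid₂.add hint₂)
    have hB := integral_mono_of_tail_le (gamma_singleton a₁ r₁) htail
      (gamma_ae_nonneg _ _) (gamma_ae_nonneg _ _) hmono_sub
      (hid₁.sub hint₁) (hid₂.sub hint₂)
    rw [integral_add hid₁ hint₁, integral_add hid₂ hint₂, hI₁, hI₂] at hA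
    rw [integral_sub hid₁ hint₁, integral_sub hid₂ hint₂, hI₁, hI₂] at hB
    exact abs_le.mpr ⟨by linarith, by linarith⟩
  · have heq : ENNReal.ofReal (a₂ / r₂ - a₁ / r₁) =
        ENNReal.ofReal
          |(∫ x, x ∂(gammaMeasure a₁ r₁)) - (∫ x, x ∂(gammaMeasure a₂ r₂))| := by
      rw [hI₁, hI₂, abs_sub_comm, abs_of_nonneg (by linarith)]
    rw [heq]
    exact le_iSup₂ (f := fun (h : ℝ → ℝ) (_ : LipschitzWith 1 h) =>
      ENNReal.ofReal |(∫ x, h x ∂(gammaMeasure a₁ r₁)) - (∫ x, h x ∂(gammaMeasure a₂ r₂))|)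
      (fun t => t) LipschitzWith.id

end WassersteinAux

/-- Exact Wasserstein-1 distance between the two Gamma posteriors arising from two
Gamma priors in the Poisson model, when the ratio of the priors is monotone
(i.e. `α₁ < α₂, β₁ > β₂` or `α₁ > α₂, β₁ < β₂`). -/
theorem wasserstein_gamma_posteriors_poisson
    (n : ℕ) (hn : 0 < n) (x : Fin n → ℕ)
    (α₁ β₁ α₂ β₂ : ℝ) (hα₁ : 0 < α₁) (hα₂ : 0 < α₂) (hβ₁ : 0 ≤ β₁) (hβ₂ : 0 ≤ β₂)
    (S : ℝ) (hS : S = ∑ i, (x i : ℝ))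
    (hmono : (α₁ < α₂ ∧ β₁ > β₂) ∨ (α₁ > α₂ ∧ β₁ < β₂)) :
    wassersteinDist (gammaMeasure (α₁ + S) (β₁ + n)) (gammaMeasure (α₂ + S) (β₂ + n)) =
      ENNReal.ofReal
        (1 / (n + β₁) * |α₂ - α₁ - (β₂ - β₁) * ((α₂ + S) / (n + β₂))|) := by
  have hSnn : 0 ≤ S := by
    rw [hS]; exact Finset.sum_nonneg fun i _ => Nat.cast_nonneg _
  have hn1 : (1 : ℝ) ≤ n := by exact_mod_cast hn
  have hr₁ : 0 < β₁ + n := by linarith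
  have hr₂ : 0 < β₂ + n := by linarith
  have ha₁ : 0 < α₁ + S := by linarith
  have ha₂ : 0 < α₂ + S := by linarith
  rcases hmono with ⟨haa, hbb⟩ | ⟨haa, hbb⟩
  · rw [wassersteinDist_gamma_eq ha₁ hr₁ ha₂ hr₂ (by linarith) (by linarith)]
    congr 1
    have hD : 0 ≤ (α₂ + S) / (β₂ + n) - (α₁ + S) / (β₁ + n) :=
      sub_nonneg.mpr (div_le_div₀ ha₂.le (by linarith) hr₂ (by linarith))
    have hX : α₂ - α₁ - (β₂ - β₁) * ((α₂ + S) / (n + β₂))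
        = (n + β₁) * ((α₂ + S) / (β₂ + n) - (α₁ + S) / (β₁ + n)) := by
      field_simp
      ring
    rw [hX, abs_of_nonneg (mul_nonneg (by linarith) hD)]
    field_simp
  · rw [wassersteinDist_comm,
      wassersteinDist_gamma_eq ha₂ hr₂ ha₁ hr₁ (by linarith) (by linarith)]
    congr 1
    have hD : 0 ≤ (α₁ + S) / (β₁ + n) - (α₂ + S) / (β₂ + n) :=
      sub_nonneg.mpr (div_le_div₀ ha₁.le (by linarith) hr₁ (by linarith))
    have hX : α₂ - α₁ - (β₂ - β₁) * ((α₂ + S) / (n + β₂))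
        = -((n + β₁) * ((α₁ + S) / (β₁ + n) - (α₂ + S) / (β₂ + n))) := by
      field_simp
      ring
    rw [hX, abs_neg, abs_of_nonneg (mul_nonneg (by linarith) hD)]
    field_simp
end

section
/- (Haldane prior versus uniform prior in the binomial model) Fix integers $n\ge 1$ and $0< x< n$. Let $P_1=\mathrm{Beta}(x,\,n-x)$ be the posterior under the Haldane prior (the improper $\mathrm{Beta}(0,0)$ prior) and $P_2=\mathrm{Beta}(x+1,\,n-x+1)$ the posterior under the uniform prior. Then $\dfrac{2|n/2-x|}{n(n+2)}\le d_W(P_1,P_2)\le \dfrac{2}{n+2}\left(\sqrt{\dfrac{x(n-x)}{n^2(n+1)}}+\left|\dfrac{x}{n}-\dfrac{1}{2}\right|\right)$. -/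
open MeasureTheory Set Filter ENNReal

/-- The Beta distribution on `(0,1)` with parameters `a, b`, with density
`Γ(a+b)/(Γ(a)Γ(b)) θ^(a-1) (1-θ)^(b-1)`. -/
noncomputable def betaMeasure (a b : ℝ) : Measure ℝ :=
  (volume.restrict (Set.Ioo (0 : ℝ) 1)).withDensity
    (fun θ => ENNReal.ofReal
      (Real.Gamma (a + b) / (Real.Gamma a * Real.Gamma b) *
        θ ^ (a - 1) * (1 - θ) ^ (b - 1)))

lemma Jii (i j : ℕ) : ∫ θ in (0:ℝ)..1, θ^i * (1-θ)^j
    = (i.factorial * j.factorial : ℝ) / (i+j+1).factorial := by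
  induction j generalizing i with
  | zero =>
    simp only [pow_zero, mul_one, integral_pow, one_pow, Nat.add_zero,
      Nat.factorial_succ, Nat.factorial_zero]
    have : (i.factorial:ℝ) ≠ 0 := by positivity
    push_cast
    rw [zero_pow (by omega)]
    field_simp
    norm_num
  | succ j ih =>
    have hparts : ∫ θ in (0:ℝ)..1, (1-θ)^(j+1) * θ^i
        = ((fun θ : ℝ => (1-θ)^(j+1)) 1 * ((fun θ:ℝ => θ^(i+1)/((i:ℝ)+1)) 1))
          - ((fun θ : ℝ => (1-θ)^(j+1)) 0 * ((fun θ:ℝ => θ^(i+1)/((i:ℝ)+1)) 0))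
          - ∫ θ in (0:ℝ)..1, (-(((j:ℝ)+1) * (1-θ)^j)) * (θ^(i+1)/((i:ℝ)+1)) := by
      apply intervalIntegral.integral_mul_deriv_eq_deriv_mul
        (u := fun θ : ℝ => (1-θ)^(j+1)) (u' := fun θ : ℝ => -(((j:ℝ)+1)*(1-θ)^j))
        (v := fun θ : ℝ => θ^(i+1)/((i:ℝ)+1)) (v' := fun θ : ℝ => θ^i)
      · intro θ _
        have h1 : HasDerivAt (fun θ : ℝ => 1 - θ) (-1) θ := by
          simpa using ((hasDerivAt_id θ).const_sub 1)
        have := h1.fun_pow (j+1)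
        push_cast at this ⊢
        convert this using 1
        ring
      · intro θ _
        have h1 : HasDerivAt (fun θ : ℝ => θ^(i+1)) (((i:ℝ)+1)*θ^i) θ := by
          have := hasDerivAt_pow (i+1) θ
          push_cast at this
          simpa using this
        have h2 := h1.div_const ((i:ℝ)+1)
        have hne : ((i:ℝ)+1) ≠ 0 := by positivity
        simpa [mul_comm, mul_div_assoc, mul_div_cancel_left₀, hne] using h2
      · exact (Continuous.intervalIntegrable (by continuity) _ _)
      · exact (Continuous.intervalIntegrable (by continuity) _ _)
    have hcomm : ∫ θ in (0:ℝ)..1, θ^i * (1-θ)^(j+1)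
        = ∫ θ in (0:ℝ)..1, (1-θ)^(j+1) * θ^i := by
      congr 1; ext θ; ring
    rw [hcomm, hparts]
    have hrw : (∫ θ in (0:ℝ)..1, (-(((j:ℝ)+1) * (1-θ)^j)) * (θ^(i+1)/((i:ℝ)+1)))
        = (-(((j:ℝ)+1)/((i:ℝ)+1))) * ∫ θ in (0:ℝ)..1, θ^(i+1) * (1-θ)^j := by
      rw [← intervalIntegral.integral_const_mul]
      congr 1; ext θ; ring
    rw [hrw, ih (i+1)]
    have e1 : i+1+j+1 = i+j+2 := by omega
    have e2 : i+(j+1)+1 = i+j+2 := by omega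
    rw [e1, e2, Nat.factorial_succ j, Nat.factorial_succ i]
    have f1 : ((i+j+2).factorial : ℝ) ≠ 0 := by positivity
    have hne : ((i:ℝ)+1) ≠ 0 := by positivity
    norm_num
    push_cast
    field_simp

lemma JiiIoo (i j : ℕ) : ∫ θ in Ioo (0:ℝ) 1, θ^i * (1-θ)^j
    = (i.factorial * j.factorial : ℝ) / (i+j+1).factorial := by
  rw [← MeasureTheory.integral_Ioc_eq_integral_Ioo,
    ← intervalIntegral.integral_of_le zero_le_one, Jii]

/-- density of Beta(p+1, q+1) -/
noncomputable def eD (p q : ℕ) (θ : ℝ) : ℝ :=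
  ((p+q+1).factorial / (p.factorial * q.factorial) : ℝ) * θ^p * (1-θ)^q

lemma eD_cont (p q : ℕ) : Continuous (eD p q) := by
  unfold eD; continuity

lemma eD_nonneg {p q : ℕ} {θ : ℝ} (hθ : θ ∈ Ioo (0:ℝ) 1) : 0 ≤ eD p q θ := by
  have h1 : (0:ℝ) < θ := hθ.1
  have h2 : (0:ℝ) < 1 - θ := by linarith [hθ.2]
  unfold eD; positivity

lemma betaMeasure_eq (p q : ℕ) :
    betaMeasure ((p:ℝ)+1) ((q:ℝ)+1)
      = (volume.restrict (Ioo (0:ℝ) 1)).withDensity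
          (fun θ => ENNReal.ofReal (eD p q θ)) := by
  unfold betaMeasure
  congr 1
  funext θ
  congr 1
  have hg1 : (p:ℝ)+1+((q:ℝ)+1) = ((p+q+1:ℕ):ℝ)+1 := by push_cast; ring
  have hg2 : Real.Gamma ((p:ℝ)+1) = p.factorial := by
    rw [← Real.Gamma_nat_eq_factorial]
  have hg3 : Real.Gamma ((q:ℝ)+1) = q.factorial := by
    rw [← Real.Gamma_nat_eq_factorial]
  have hg4 : Real.Gamma ((p:ℝ)+1+((q:ℝ)+1)) = (p+q+1).factorial := by
    rw [hg1, ← Real.Gamma_nat_eq_factorial]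
  have he1 : (p:ℝ)+1-1 = ((p:ℕ):ℝ) := by ring
  have he2 : (q:ℝ)+1-1 = ((q:ℕ):ℝ) := by ring
  rw [hg2, hg3, hg4, he1, he2, Real.rpow_natCast, Real.rpow_natCast]
  rfl

lemma integral_beta (p q : ℕ) (g : ℝ → ℝ) :
    ∫ θ, g θ ∂(betaMeasure ((p:ℝ)+1) ((q:ℝ)+1))
      = ∫ θ in Ioo (0:ℝ) 1, eD p q θ * g θ := by
  rw [betaMeasure_eq]
  have hm : Measurable (fun θ => (eD p q θ).toNNReal) :=
    (eD_cont p q).measurable.real_toNNReal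
  rw [show (fun θ => ENNReal.ofReal (eD p q θ))
      = (fun θ => ((eD p q θ).toNNReal : ℝ≥0∞)) from rfl,
    integral_withDensity_eq_integral_smul hm]
  refine setIntegral_congr_fun measurableSet_Ioo (fun θ hθ => ?_)
  simp [NNReal.smul_def, Real.coe_toNNReal _ (eD_nonneg hθ)]

lemma mom (p q k l : ℕ) :
    ∫ θ in Ioo (0:ℝ) 1, eD p q θ * (θ^k * (1-θ)^l)
      = ((p+q+1).factorial * ((p+k).factorial * (q+l).factorial) : ℝ) /
        ((p.factorial * q.factorial) * (p+q+k+l+1).factorial) := by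
  have hptw : ∀ θ : ℝ, eD p q θ * (θ^k * (1-θ)^l)
      = ((p+q+1).factorial / (p.factorial * q.factorial) : ℝ)
        * (θ^(p+k) * (1-θ)^(q+l)) := by
    intro θ; unfold eD; rw [pow_add, pow_add]; ring
  simp_rw [hptw]
  rw [MeasureTheory.integral_const_mul, JiiIoo]
  have : p+k+(q+l)+1 = p+q+k+l+1 := by omega
  rw [this]
  ring

lemma m00 (p q : ℕ) : ∫ θ in Ioo (0:ℝ) 1, eD p q θ = 1 := by
  have h := mom p q 0 0
  simp only [pow_zero, mul_one, Nat.add_zero] at h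
  rw [h, show p+q+0+0+1 = p+q+1 from by omega]
  have h1 : ((p+q+1).factorial : ℝ) ≠ 0 := by positivity
  have h2 : (p.factorial : ℝ) ≠ 0 := by positivity
  have h3 : (q.factorial : ℝ) ≠ 0 := by positivity
  field_simp

lemma m10 (p q : ℕ) : ∫ θ in Ioo (0:ℝ) 1, eD p q θ * θ
    = ((p:ℝ)+1)/((p:ℝ)+(q:ℝ)+2) := by
  have h := mom p q 1 0
  simp only [pow_one, pow_zero, mul_one, Nat.add_zero] at h
  rw [h, show p+q+1+0+1 = (p+q+1)+1 from by omega, Nat.factorial_succ (p+q+1),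
    Nat.factorial_succ p]
  have h1 : ((p+q+1).factorial : ℝ) ≠ 0 := by positivity
  have h2 : (p.factorial : ℝ) ≠ 0 := by positivity
  have h3 : (q.factorial : ℝ) ≠ 0 := by positivity
  have h4 : ((p:ℝ)+(q:ℝ)+2) ≠ 0 := by positivity
  push_cast
  field_simp
  ring

lemma m20 (p q : ℕ) : ∫ θ in Ioo (0:ℝ) 1, eD p q θ * θ^2
    = (((p:ℝ)+1)*((p:ℝ)+2))/((((p:ℝ)+(q:ℝ)+2))*((p:ℝ)+(q:ℝ)+3)) := by
  have h := mom p q 2 0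
  simp only [pow_zero, mul_one, Nat.add_zero] at h
  rw [h, show p+q+2+0+1 = ((p+q+1)+1)+1 from by omega,
    Nat.factorial_succ ((p+q+1)+1), Nat.factorial_succ (p+q+1),
    show p+2 = (p+1)+1 from rfl, Nat.factorial_succ (p+1), Nat.factorial_succ p]
  have h1 : ((p+q+1).factorial : ℝ) ≠ 0 := by positivity
  have h2 : (p.factorial : ℝ) ≠ 0 := by positivity
  have h3 : (q.factorial : ℝ) ≠ 0 := by positivity
  have h4 : ((p:ℝ)+(q:ℝ)+2) ≠ 0 := by positivity
  have h5 : ((p:ℝ)+(q:ℝ)+3) ≠ 0 := by positivity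
  push_cast
  field_simp
  ring

lemma m11 (p q : ℕ) : ∫ θ in Ioo (0:ℝ) 1, eD p q θ * (θ*(1-θ))
    = (((p:ℝ)+1)*((q:ℝ)+1))/((((p:ℝ)+(q:ℝ)+2))*((p:ℝ)+(q:ℝ)+3)) := by
  have h := mom p q 1 1
  simp only [pow_one] at h
  rw [h, show p+q+1+1+1 = ((p+q+1)+1)+1 from by omega,
    Nat.factorial_succ ((p+q+1)+1), Nat.factorial_succ (p+q+1),
    Nat.factorial_succ p, Nat.factorial_succ q]
  have h1 : ((p+q+1).factorial : ℝ) ≠ 0 := by positivity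
  have h2 : (p.factorial : ℝ) ≠ 0 := by positivity
  have h3 : (q.factorial : ℝ) ≠ 0 := by positivity
  have h4 : ((p:ℝ)+(q:ℝ)+2) ≠ 0 := by positivity
  have h5 : ((p:ℝ)+(q:ℝ)+3) ≠ 0 := by positivity
  push_cast
  field_simp
  ring

lemma m22 (p q : ℕ) : ∫ θ in Ioo (0:ℝ) 1, eD p q θ * (θ*(1-θ))^2
    = (((p:ℝ)+1)*((p:ℝ)+2)*(((q:ℝ)+1)*((q:ℝ)+2)))/
      ((((p:ℝ)+(q:ℝ)+2))*((p:ℝ)+(q:ℝ)+3)*(((p:ℝ)+(q:ℝ)+4)*((p:ℝ)+(q:ℝ)+5))) := by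
  have h := mom p q 2 2
  have hi : ∀ θ:ℝ, eD p q θ * (θ*(1-θ))^2 = eD p q θ * (θ^2*(1-θ)^2) := by
    intro θ; ring
  simp_rw [hi]
  rw [h, show p+q+2+2+1 = ((((p+q+1)+1)+1)+1)+1 from by omega,
    Nat.factorial_succ ((((p+q+1)+1)+1)+1), Nat.factorial_succ (((p+q+1)+1)+1),
    Nat.factorial_succ ((p+q+1)+1), Nat.factorial_succ (p+q+1),
    show p+2 = (p+1)+1 from rfl, Nat.factorial_succ (p+1), Nat.factorial_succ p,
    show q+2 = (q+1)+1 from rfl, Nat.factorial_succ (q+1), Nat.factorial_succ q]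
  have h1 : ((p+q+1).factorial : ℝ) ≠ 0 := by positivity
  have h2 : (p.factorial : ℝ) ≠ 0 := by positivity
  have h3 : (q.factorial : ℝ) ≠ 0 := by positivity
  have h4 : ((p:ℝ)+(q:ℝ)+2) ≠ 0 := by positivity
  have h5 : ((p:ℝ)+(q:ℝ)+3) ≠ 0 := by positivity
  have h6 : ((p:ℝ)+(q:ℝ)+4) ≠ 0 := by positivity
  have h7 : ((p:ℝ)+(q:ℝ)+5) ≠ 0 := by positivity
  push_cast
  field_simp
  ring

lemma cIntOn {f : ℝ → ℝ} (hf : Continuous f) :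
    IntegrableOn f (Ioo (0:ℝ) 1) volume :=
  (hf.integrableOn_Icc (a := 0) (b := 1)).mono_set Ioo_subset_Icc_self

lemma varA (p q : ℕ) :
    ∫ θ in Ioo (0:ℝ) 1, eD p q θ * (θ - ((p:ℝ)+1)/((p:ℝ)+(q:ℝ)+2))^2
      = (((p:ℝ)+1)*((q:ℝ)+1)) /
        (((p:ℝ)+(q:ℝ)+2)^2*((p:ℝ)+(q:ℝ)+3)) := by
  set pm : ℝ := ((p:ℝ)+1)/((p:ℝ)+(q:ℝ)+2) with hpm
  have key : (fun θ : ℝ => eD p q θ * (θ - pm)^2)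
      = (fun θ : ℝ => (eD p q θ * θ^2 - (2*pm)*(eD p q θ * θ)) + pm^2*(eD p q θ)) :=
    funext fun θ => by ring
  have i1 : IntegrableOn (fun θ : ℝ => eD p q θ * θ^2) (Ioo (0:ℝ) 1) volume :=
    cIntOn ((eD_cont p q).mul (continuous_pow 2))
  have i2 : IntegrableOn (fun θ : ℝ => (2*pm)*(eD p q θ * θ)) (Ioo (0:ℝ) 1) volume :=
    (cIntOn ((eD_cont p q).mul continuous_id)).const_mul _
  have i12 : IntegrableOn (fun θ : ℝ => eD p q θ * θ^2 - (2*pm)*(eD p q θ * θ))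
      (Ioo (0:ℝ) 1) volume := i1.sub i2
  have i3 : IntegrableOn (fun θ : ℝ => pm^2*(eD p q θ)) (Ioo (0:ℝ) 1) volume :=
    (cIntOn (eD_cont p q)).const_mul _
  rw [key, integral_add i12 i3, integral_sub i1 i2,
    integral_const_mul, integral_const_mul, m20, m10, m00, hpm]
  have h4 : ((p:ℝ)+(q:ℝ)+2) ≠ 0 := by positivity
  have h5 : ((p:ℝ)+(q:ℝ)+3) ≠ 0 := by positivity
  field_simp
  ring

lemma cvar (p q : ℕ) :
    ∫ θ in Ioo (0:ℝ) 1, eD p q θ *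
        (1 - (((p:ℝ)+(q:ℝ)+2)*((p:ℝ)+(q:ℝ)+3)/(((p:ℝ)+1)*((q:ℝ)+1)))*(θ*(1-θ)))^2
      = (((p:ℝ)+(q:ℝ)+2)*((p:ℝ)+(q:ℝ)+3)^2 - (4*((p:ℝ)+(q:ℝ)+2)+6)*(((p:ℝ)+1)*((q:ℝ)+1)))
        / ((((p:ℝ)+1)*((q:ℝ)+1))*((p:ℝ)+(q:ℝ)+4)*((p:ℝ)+(q:ℝ)+5)) := by
  set K : ℝ := ((p:ℝ)+(q:ℝ)+2)*((p:ℝ)+(q:ℝ)+3)/(((p:ℝ)+1)*((q:ℝ)+1)) with hK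
  have key : (fun θ : ℝ => eD p q θ * (1 - K*(θ*(1-θ)))^2)
      = (fun θ : ℝ => (eD p q θ - (2*K)*(eD p q θ * (θ*(1-θ))))
          + K^2*(eD p q θ * (θ*(1-θ))^2)) :=
    funext fun θ => by ring
  have i0 : IntegrableOn (fun θ : ℝ => eD p q θ) (Ioo (0:ℝ) 1) volume :=
    cIntOn (eD_cont p q)
  have i2 : IntegrableOn (fun θ : ℝ => (2*K)*(eD p q θ * (θ*(1-θ)))) (Ioo (0:ℝ) 1) volume :=
    (cIntOn ((eD_cont p q).mul (by continuity))).const_mul _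
  have i12 : IntegrableOn (fun θ : ℝ => eD p q θ - (2*K)*(eD p q θ * (θ*(1-θ))))
      (Ioo (0:ℝ) 1) volume := i0.sub i2
  have i3 : IntegrableOn (fun θ : ℝ => K^2*(eD p q θ * (θ*(1-θ))^2)) (Ioo (0:ℝ) 1) volume :=
    (cIntOn ((eD_cont p q).mul (by continuity))).const_mul _
  rw [key, integral_add i12 i3, integral_sub i0 i2,
    integral_const_mul, integral_const_mul, m00, m11, m22, hK]
  have h1 : ((p:ℝ)+1) ≠ 0 := by positivity
  have h2 : ((q:ℝ)+1) ≠ 0 := by positivity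
  have h4 : ((p:ℝ)+(q:ℝ)+2) ≠ 0 := by positivity
  have h5 : ((p:ℝ)+(q:ℝ)+3) ≠ 0 := by positivity
  have h6 : ((p:ℝ)+(q:ℝ)+4) ≠ 0 := by positivity
  have h7 : ((p:ℝ)+(q:ℝ)+5) ≠ 0 := by positivity
  field_simp
  ring

lemma erel (p q : ℕ) (θ : ℝ) :
    eD (p+1) (q+1) θ
      = (((p:ℝ)+(q:ℝ)+2)*((p:ℝ)+(q:ℝ)+3)/(((p:ℝ)+1)*((q:ℝ)+1))) * (θ*(1-θ))
        * eD p q θ := by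
  unfold eD
  rw [show p+1+(q+1)+1 = (((p+q+1)+1)+1) from by omega,
    Nat.factorial_succ (((p+q+1))+1), Nat.factorial_succ (p+q+1),
    Nat.factorial_succ p, Nat.factorial_succ q, pow_succ θ p, pow_succ (1-θ) q]
  have h1 : ((p:ℝ)+1) ≠ 0 := by positivity
  have h2 : ((q:ℝ)+1) ≠ 0 := by positivity
  have h3 : (p.factorial : ℝ) ≠ 0 := by positivity
  have h4 : (q.factorial : ℝ) ≠ 0 := by positivity
  push_cast
  field_simp
  ring

lemma csInt {μ : Measure ℝ} {u v : ℝ → ℝ}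
    (hu : Integrable (fun x => u x^2) μ) (hv : Integrable (fun x => v x^2) μ)
    (huv : Integrable (fun x => u x * v x) μ) :
    (∫ x, u x * v x ∂μ)^2 ≤ (∫ x, u x^2 ∂μ) * (∫ x, v x^2 ∂μ) := by
  set A := ∫ x, u x^2 ∂μ
  set B := ∫ x, u x * v x ∂μ
  set C := ∫ x, v x^2 ∂μ
  have key : ∀ lam : ℝ, 0 ≤ C * (lam*lam) + (-2*B) * lam + A := by
    intro lam
    have h0 : 0 ≤ ∫ x, (u x - lam * v x)^2 ∂μ :=
      integral_nonneg fun x => sq_nonneg _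
    have hexp : (fun x => (u x - lam * v x)^2)
        = fun x => (u x^2 - (2*lam)*(u x * v x)) + lam^2 * (v x^2) :=
      funext fun x => by ring
    have j2 : Integrable (fun x => (2*lam)*(u x * v x)) μ := huv.const_mul _
    have j12 : Integrable (fun x => u x^2 - (2*lam)*(u x * v x)) μ := hu.sub j2
    have j3 : Integrable (fun x => lam^2 * (v x^2)) μ := hv.const_mul _
    rw [hexp, integral_add j12 j3, integral_sub hu j2,
      integral_const_mul, integral_const_mul] at h0
    nlinarith [h0]
  have hd := discrim_le_zero key
  unfold discrim at hd
  nlinarith [hd]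

lemma scalar {a b : ℝ} (ha : 1 ≤ a) (hb : 1 ≤ b) :
    Real.sqrt (a*b/((a+b)^2*((a+b)+1))) * Real.sqrt
      (((a+b)*((a+b)+1)^2 - (4*(a+b)+6)*(a*b)) / ((a*b)*((a+b)+2)*((a+b)+3)))
    ≤ 2/((a+b)+2) * (Real.sqrt (a*b/((a+b)^2*((a+b)+1))) + |a/(a+b) - 1/2|) := by
  set n : ℝ := a + b with hn
  set t : ℝ := a * b with htdef
  have hn2 : 2 ≤ n := by simp only [hn]; linarith
  have hnpos : 0 < n := by linarith
  have ht0 : 1 ≤ t := by nlinarith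
  have htpos : 0 < t := by linarith
  have ht1 : n - 1 ≤ t := by nlinarith [mul_nonneg (by linarith : (0:ℝ) ≤ a - 1) (by linarith : (0:ℝ) ≤ b - 1)]
  have htq : 4*t ≤ n^2 := by nlinarith [sq_nonneg (a - b)]
  set N : ℝ := n*(n+1)^2 - (4*n+6)*t with hN
  have hN0 : 0 ≤ N := by nlinarith
  set X : ℝ := t/(n^2*(n+1)) with hX
  set Y : ℝ := N/(t*(n+2)*(n+3)) with hY
  set Q : ℝ := (n^2-4*t)/(4*n^2) with hQ
  have hXpos : 0 ≤ X := by positivity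
  have hQpos : 0 ≤ Q := by
    rw [hQ]
    apply div_nonneg (by linarith) (by positivity)
  have habs : |a/n - 1/2| = Real.sqrt Q := by
    rw [← Real.sqrt_sq_eq_abs]
    congr 1
    rw [hQ, htdef, hn]
    have : a + b ≠ 0 := by linarith
    field_simp
    ring
  have step1 : Real.sqrt X * Real.sqrt Y = Real.sqrt (X*Y) :=
    (Real.sqrt_mul hXpos Y).symm
  have key : X*Y ≤ (2/(n+2))^2 * (X + Q) := by
    have e1 : X*Y = N/(n^2*(n+1)*(n+2)*(n+3)) := by
      rw [hX, hY]
      field_simp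
    have e2 : (2/(n+2))^2 * (X + Q)
        = (4*t+(n+1)*(n^2-4*t))/((n+2)^2*(n^2*(n+1))) := by
      rw [hX, hQ]
      field_simp
      ring
    rw [e1, e2, div_le_div_iff₀ (by positivity) (by positivity)]
    have core : N*(n+2) ≤ (4*t+(n+1)*(n^2-4*t))*(n+3) := by
      nlinarith [mul_nonneg (by linarith : (0:ℝ) ≤ t-(n-1)) (by linarith : (0:ℝ) ≤ 2*n+12)]
    have hmul := mul_le_mul_of_nonneg_left core (by positivity : (0:ℝ) ≤ n^2*(n+1)*(n+2))
    calc N*((n+2)^2*(n^2*(n+1))) = (n^2*(n+1)*(n+2))*(N*(n+2)) := by ring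
      _ ≤ (n^2*(n+1)*(n+2))*((4*t+(n+1)*(n^2-4*t))*(n+3)) := hmul
      _ = (4*t+(n+1)*(n^2-4*t))*(n^2*(n+1)*(n+2)*(n+3)) := by ring
  have step2 : Real.sqrt (X*Y) ≤ (2/(n+2)) * Real.sqrt (X+Q) := by
    have := Real.sqrt_le_sqrt key
    rwa [Real.sqrt_mul (by positivity) (X+Q), Real.sqrt_sq (by positivity)] at this
  have step3 : Real.sqrt (X+Q) ≤ Real.sqrt X + Real.sqrt Q := by
    have h1 : X + Q ≤ (Real.sqrt X + Real.sqrt Q)^2 := by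
      nlinarith [Real.sq_sqrt hXpos, Real.sq_sqrt hQpos, Real.sqrt_nonneg X,
        Real.sqrt_nonneg Q, mul_nonneg (Real.sqrt_nonneg X) (Real.sqrt_nonneg Q)]
    have := Real.sqrt_le_sqrt h1
    rwa [Real.sqrt_sq (by positivity)] at this
  rw [habs, step1]
  calc Real.sqrt (X*Y) ≤ (2/(n+2)) * Real.sqrt (X+Q) := step2
    _ ≤ (2/(n+2)) * (Real.sqrt X + Real.sqrt Q) := by
        apply mul_le_mul_of_nonneg_left step3 (by positivity)

lemma integral_beta' (p q : ℕ) (g : ℝ → ℝ) :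
    ∫ θ, g θ ∂(betaMeasure (((p:ℝ)+1)+1) (((q:ℝ)+1)+1))
      = ∫ θ in Ioo (0:ℝ) 1, eD (p+1) (q+1) θ * g θ := by
  have h1 : ((p:ℝ)+1)+1 = (((p+1:ℕ)):ℝ)+1 := by push_cast; ring
  have h2 : ((q:ℝ)+1)+1 = (((q+1:ℕ)):ℝ)+1 := by push_cast; ring
  rw [h1, h2, integral_beta]

lemma mainBound (p q : ℕ) (h : ℝ → ℝ) (hL : LipschitzWith 1 h) :
    |(∫ θ, h θ ∂(betaMeasure ((p:ℝ)+1) ((q:ℝ)+1)))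
      - ∫ θ, h θ ∂(betaMeasure (((p:ℝ)+1)+1) (((q:ℝ)+1)+1))|
    ≤ 2/((p:ℝ)+(q:ℝ)+4) *
        (Real.sqrt ((((p:ℝ)+1)*((q:ℝ)+1))/(((p:ℝ)+(q:ℝ)+2)^2*((p:ℝ)+(q:ℝ)+3)))
        + |((p:ℝ)+1)/((p:ℝ)+(q:ℝ)+2) - 1/2|) := by
  have hc : Continuous h := hL.continuous
  set pm : ℝ := ((p:ℝ)+1)/((p:ℝ)+(q:ℝ)+2) with hpm
  set K : ℝ := ((p:ℝ)+(q:ℝ)+2)*((p:ℝ)+(q:ℝ)+3)/(((p:ℝ)+1)*((q:ℝ)+1)) with hK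
  set u : ℝ → ℝ := fun θ => Real.sqrt (eD p q θ) * |θ - pm| with hu
  set v : ℝ → ℝ := fun θ => Real.sqrt (eD p q θ) * |1 - K*(θ*(1-θ))| with hv
  have hcu : Continuous u := by
    apply Continuous.mul
    · exact Real.continuous_sqrt.comp (eD_cont p q)
    · exact (continuous_id.sub continuous_const).abs
  have hcv : Continuous v := by
    apply Continuous.mul
    · exact Real.continuous_sqrt.comp (eD_cont p q)
    · exact (continuous_const.sub ((continuous_const.mul
        (continuous_id.mul (continuous_const.sub continuous_id))))).abs
  -- step A+B: express difference as single integral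
  have iA : IntegrableOn (fun θ : ℝ => eD p q θ * h θ) (Ioo (0:ℝ) 1) volume :=
    cIntOn ((eD_cont p q).mul hc)
  have iB : IntegrableOn (fun θ : ℝ => eD (p+1) (q+1) θ * h θ) (Ioo (0:ℝ) 1) volume :=
    cIntOn ((eD_cont (p+1) (q+1)).mul hc)
  have iC : IntegrableOn (fun θ : ℝ => h pm * eD p q θ) (Ioo (0:ℝ) 1) volume :=
    (cIntOn (eD_cont p q)).const_mul _
  have iD : IntegrableOn (fun θ : ℝ => h pm * eD (p+1) (q+1) θ) (Ioo (0:ℝ) 1) volume :=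
    (cIntOn (eD_cont (p+1) (q+1))).const_mul _
  have stepAB : (∫ θ, h θ ∂(betaMeasure ((p:ℝ)+1) ((q:ℝ)+1)))
      - ∫ θ, h θ ∂(betaMeasure (((p:ℝ)+1)+1) (((q:ℝ)+1)+1))
      = ∫ θ in Ioo (0:ℝ) 1, (eD p q θ - eD (p+1) (q+1) θ) * (h θ - h pm) := by
    rw [integral_beta, integral_beta']
    have key : (fun θ : ℝ => (eD p q θ - eD (p+1) (q+1) θ) * (h θ - h pm))
        = fun θ : ℝ => (eD p q θ * h θ - eD (p+1) (q+1) θ * h θ)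
            - (h pm * eD p q θ - h pm * eD (p+1) (q+1) θ) :=
      funext fun θ => by ring
    have iAB : IntegrableOn (fun θ : ℝ => eD p q θ * h θ - eD (p+1) (q+1) θ * h θ)
        (Ioo (0:ℝ) 1) volume := iA.sub iB
    have iCD : IntegrableOn (fun θ : ℝ => h pm * eD p q θ - h pm * eD (p+1) (q+1) θ)
        (Ioo (0:ℝ) 1) volume := iC.sub iD
    rw [key, integral_sub iAB iCD, integral_sub iA iB,
      integral_sub iC iD, integral_const_mul, integral_const_mul, m00, m00]
    ring
  rw [stepAB]
  -- step C+D: bound by ∫ u*v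
  have ptD : ∀ θ ∈ Ioo (0:ℝ) 1,
      |(eD p q θ - eD (p+1) (q+1) θ) * (h θ - h pm)| ≤ u θ * v θ := by
    intro θ hθ
    have w1 : eD p q θ - eD (p+1) (q+1) θ = eD p q θ * (1 - K*(θ*(1-θ))) := by
      rw [erel]; ring
    have lip : |h θ - h pm| ≤ |θ - pm| := by
      have := hL.dist_le_mul θ pm
      simpa [Real.dist_eq] using this
    have e0 := eD_nonneg (p := p) (q := q) hθ
    calc |(eD p q θ - eD (p+1) (q+1) θ) * (h θ - h pm)|
        = (eD p q θ * |1 - K*(θ*(1-θ))|) * |h θ - h pm| := by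
          rw [w1, abs_mul, abs_mul, abs_of_nonneg e0]
      _ ≤ (eD p q θ * |1 - K*(θ*(1-θ))|) * |θ - pm| := by
          apply mul_le_mul_of_nonneg_left lip (by positivity)
      _ = u θ * v θ := by
          have huv' : u θ * v θ = (Real.sqrt (eD p q θ) * Real.sqrt (eD p q θ))
              * (|1 - K*(θ*(1-θ))| * |θ - pm|) := by
            simp only [hu, hv]; ring
          rw [huv', Real.mul_self_sqrt e0]
          ring
  have stepCD : |∫ θ in Ioo (0:ℝ) 1, (eD p q θ - eD (p+1) (q+1) θ) * (h θ - h pm)|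
      ≤ ∫ θ in Ioo (0:ℝ) 1, u θ * v θ := by
    have h1 := norm_integral_le_integral_norm (μ := volume.restrict (Ioo (0:ℝ) 1))
      (f := fun θ => (eD p q θ - eD (p+1) (q+1) θ) * (h θ - h pm))
    rw [Real.norm_eq_abs] at h1
    refine h1.trans ?_
    apply setIntegral_mono_on
    · exact (cIntOn (((eD_cont p q).sub (eD_cont (p+1) (q+1))).mul
        (hc.sub continuous_const))).abs
    · exact cIntOn (hcu.mul hcv)
    · exact measurableSet_Ioo
    · intro θ hθ
      rw [Real.norm_eq_abs]
      exact ptD θ hθ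
  refine stepCD.trans ?_
  -- step E: Cauchy-Schwarz
  have hu2 : Integrable (fun θ => u θ^2) (volume.restrict (Ioo (0:ℝ) 1)) :=
    cIntOn (hcu.pow 2)
  have hv2 : Integrable (fun θ => v θ^2) (volume.restrict (Ioo (0:ℝ) 1)) :=
    cIntOn (hcv.pow 2)
  have huv : Integrable (fun θ => u θ * v θ) (volume.restrict (Ioo (0:ℝ) 1)) :=
    cIntOn (hcu.mul hcv)
  have hcs := csInt hu2 hv2 huv
  have huvnn : 0 ≤ ∫ θ in Ioo (0:ℝ) 1, u θ * v θ :=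
    integral_nonneg fun θ => mul_nonneg
      (mul_nonneg (Real.sqrt_nonneg _) (abs_nonneg _))
      (mul_nonneg (Real.sqrt_nonneg _) (abs_nonneg _))
  have hu2val : ∫ θ in Ioo (0:ℝ) 1, u θ^2
      = (((p:ℝ)+1)*((q:ℝ)+1)) / (((p:ℝ)+(q:ℝ)+2)^2*((p:ℝ)+(q:ℝ)+3)) := by
    rw [← varA p q]
    refine setIntegral_congr_fun measurableSet_Ioo (fun θ hθ => ?_)
    rw [hu]
    simp only
    rw [mul_pow, Real.sq_sqrt (eD_nonneg hθ), sq_abs]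
  have hv2val : ∫ θ in Ioo (0:ℝ) 1, v θ^2
      = (((p:ℝ)+(q:ℝ)+2)*((p:ℝ)+(q:ℝ)+3)^2 - (4*((p:ℝ)+(q:ℝ)+2)+6)*(((p:ℝ)+1)*((q:ℝ)+1)))
        / ((((p:ℝ)+1)*((q:ℝ)+1))*((p:ℝ)+(q:ℝ)+4)*((p:ℝ)+(q:ℝ)+5)) := by
    rw [← cvar p q]
    refine setIntegral_congr_fun measurableSet_Ioo (fun θ hθ => ?_)
    rw [hv]
    simp only
    rw [mul_pow, Real.sq_sqrt (eD_nonneg hθ), sq_abs, hK]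
  have step2 : ∫ θ in Ioo (0:ℝ) 1, u θ * v θ
      ≤ Real.sqrt ((((p:ℝ)+1)*((q:ℝ)+1)) / (((p:ℝ)+(q:ℝ)+2)^2*((p:ℝ)+(q:ℝ)+3)))
        * Real.sqrt ((((p:ℝ)+(q:ℝ)+2)*((p:ℝ)+(q:ℝ)+3)^2
            - (4*((p:ℝ)+(q:ℝ)+2)+6)*(((p:ℝ)+1)*((q:ℝ)+1)))
          / ((((p:ℝ)+1)*((q:ℝ)+1))*((p:ℝ)+(q:ℝ)+4)*((p:ℝ)+(q:ℝ)+5))) := by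
    have h2 := Real.sqrt_le_sqrt hcs
    rw [Real.sqrt_sq huvnn, hu2val, hv2val, Real.sqrt_mul (by positivity)] at h2
    exact h2
  refine step2.trans ?_
  -- final: apply scalar with a := p+1, b := q+1
  have hsc := scalar (a := (p:ℝ)+1) (b := (q:ℝ)+1) (by norm_num) (by norm_num)
  have e1 : ((p:ℝ)+1)+((q:ℝ)+1) = (p:ℝ)+(q:ℝ)+2 := by ring
  have e2 : ((p:ℝ)+(q:ℝ)+2)+1 = (p:ℝ)+(q:ℝ)+3 := by ring
  have e3 : ((p:ℝ)+(q:ℝ)+2)+2 = (p:ℝ)+(q:ℝ)+4 := by ring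
  have e4 : ((p:ℝ)+(q:ℝ)+2)+3 = (p:ℝ)+(q:ℝ)+5 := by ring
  rw [e1, e2, e3, e4] at hsc
  exact hsc

/-- Bounds on the Wasserstein-1 distance between the posteriors for the binomial success
probability under the improper Haldane prior `Beta(0,0)` and under the uniform prior. -/
theorem wasserstein_haldane_vs_uniform_binomial
    (n x : ℕ) (hn : 1 ≤ n) (hx₀ : 0 < x) (hxn : x < n) :
    ENNReal.ofReal
        (2 * |(n : ℝ) / 2 - (x : ℝ)| / ((n : ℝ) * ((n : ℝ) + 2))) ≤
      wassersteinDist (betaMeasure (x : ℝ) ((n : ℝ) - (x : ℝ)))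
        (betaMeasure ((x : ℝ) + 1) ((n : ℝ) - (x : ℝ) + 1)) ∧
    wassersteinDist (betaMeasure (x : ℝ) ((n : ℝ) - (x : ℝ)))
        (betaMeasure ((x : ℝ) + 1) ((n : ℝ) - (x : ℝ) + 1)) ≤
      ENNReal.ofReal
        (2 / ((n : ℝ) + 2) *
          (Real.sqrt (((x : ℝ) * ((n : ℝ) - (x : ℝ))) /
              ((n : ℝ) ^ 2 * ((n : ℝ) + 1))) +
            |(x : ℝ) / (n : ℝ) - 1 / 2|)) := by
  obtain ⟨p, hp⟩ : ∃ p, x = p + 1 := ⟨x - 1, by omega⟩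
  obtain ⟨q, hq⟩ : ∃ q, n - x = q + 1 := ⟨n - x - 1, by omega⟩
  have hnpq : n = p + q + 2 := by omega
  have hxr : (x:ℝ) = (p:ℝ)+1 := by rw [hp]; push_cast; ring
  have hnr : (n:ℝ) = (p:ℝ)+(q:ℝ)+2 := by rw [hnpq]; push_cast; ring
  have hnxr : (n:ℝ) - (x:ℝ) = (q:ℝ)+1 := by rw [hxr, hnr]; ring
  rw [hnxr, hxr, hnr]
  constructor
  · -- lower bound
    have v1 : (∫ θ : ℝ, θ ∂(betaMeasure ((p:ℝ)+1) ((q:ℝ)+1)))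
        = ((p:ℝ)+1)/((p:ℝ)+(q:ℝ)+2) := by
      rw [integral_beta p q (fun θ => θ)]
      exact m10 p q
    have v2 : (∫ θ : ℝ, θ ∂(betaMeasure (((p:ℝ)+1)+1) (((q:ℝ)+1)+1)))
        = ((p:ℝ)+2)/((p:ℝ)+(q:ℝ)+4) := by
      rw [integral_beta' p q (fun θ => θ), m10 (p+1) (q+1)]
      push_cast; ring
    simp only [wassersteinDist]
    refine le_iSup₂_of_le (fun θ : ℝ => θ) (LipschitzWith.id) (le_of_eq ?_)
    rw [v1, v2]
    congr 1
    have d1 : ((p:ℝ)+(q:ℝ)+2) ≠ 0 := by positivity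
    have d2 : ((p:ℝ)+(q:ℝ)+4) ≠ 0 := by positivity
    have hD : ((p:ℝ)+1)/((p:ℝ)+(q:ℝ)+2) - ((p:ℝ)+2)/((p:ℝ)+(q:ℝ)+4)
        = ((p:ℝ)-(q:ℝ))/(((p:ℝ)+(q:ℝ)+2)*((p:ℝ)+(q:ℝ)+4)) := by
      field_simp; ring
    have hE : ((p:ℝ)+(q:ℝ)+2)/2 - ((p:ℝ)+1) = -(((p:ℝ)-(q:ℝ))/2) := by ring
    rw [hD, hE, abs_neg, abs_div, abs_div,
      abs_of_pos (show (0:ℝ) < ((p:ℝ)+(q:ℝ)+2)*((p:ℝ)+(q:ℝ)+4) by positivity),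
      abs_of_pos (show (0:ℝ) < (2:ℝ) by norm_num),
      show ((p:ℝ)+(q:ℝ)+2)+2 = (p:ℝ)+(q:ℝ)+4 from by ring]
    ring
  · -- upper bound
    simp only [wassersteinDist]
    refine iSup₂_le fun h hL => ?_
    apply ofReal_le_ofReal
    refine (mainBound p q h hL).trans (le_of_eq ?_)
    rw [show ((p:ℝ)+(q:ℝ)+2)+2 = (p:ℝ)+(q:ℝ)+4 from by ring,
      show ((p:ℝ)+(q:ℝ)+2)+1 = (p:ℝ)+(q:ℝ)+3 from by ring]
end

section
/- (Inverse Gamma prior versus Jeffreys prior for the normal variance) Fix an integer $n>2$, a known location $\mu\in\mathbb{R}$, real data $x_1,\dots,x_n$ with $s=\sum_{i=1}^n (x_i-\mu)^2>0$, and reals $\alpha,\beta>0$. Let $P_1=\mathrm{IG}(n/2,\,s/2)$ be the posterior for the normal variance $\sigma^2$ under the Jeffreys prior $p(\sigma^2)\propto 1/\sigma^2$, and $P_2=\mathrm{IG}(n/2+\alpha,\,s/2+\beta)$ the posterior under an $\mathrm{IG}(\alpha,\beta)$ prior. Then the Wasserstein-1 distance satisfies $\dfrac{\left|\frac{\alpha}{2}s-\left(\frac{n}{2}-1\right)\beta\right|}{\left(\frac{n}{2}+\alpha-1\right)\left(\frac{n}{2}-1\right)}\le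 d_W(P_1,P_2)\le \dfrac{\frac{\alpha}{2}s+\frac{n\beta}{2}+\beta(2\alpha-1)}{\left(\frac{n}{2}+\alpha-1\right)\left(\frac{n}{2}-1\right)}$. -/
open MeasureTheory Set Filter ENNReal

/-- The Inverse Gamma distribution on `(0,∞)` with shape `a` and scale `b`, with density
`b^a/Γ(a) θ^(-a-1) exp(-b/θ)`. -/
noncomputable def invGammaMeasure (a b : ℝ) : Measure ℝ :=
  (volume.restrict (Set.Ioi (0 : ℝ))).withDensity
    (fun θ => ENNReal.ofReal
      (b ^ a / Real.Gamma a * θ ^ (-a - 1) * Real.exp (-b / θ)))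

namespace IGAux

open scoped NNReal

/-- The inverse-gamma density as a real function. -/
noncomputable def dens (a b : ℝ) (θ : ℝ) : ℝ :=
  b ^ a / Real.Gamma a * θ ^ (-a - 1) * Real.exp (-b / θ)

lemma ig_eq (a b : ℝ) : invGammaMeasure a b
    = (volume.restrict (Set.Ioi (0 : ℝ))).withDensity
      (fun θ => ENNReal.ofReal (dens a b θ)) := rfl

lemma inv_image_Ioi : (fun y : ℝ => y⁻¹) '' (Ioi 0) = Ioi 0 := by
  ext x
  constructor
  · rintro ⟨y, hy, rfl⟩
    exact mem_Ioi.mpr (inv_pos.mpr (mem_Ioi.mp hy))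
  · intro hx
    exact ⟨x⁻¹, mem_Ioi.mpr (inv_pos.mpr hx), inv_inv x⟩

lemma inv_hasDeriv : ∀ x ∈ Ioi (0:ℝ),
    HasDerivWithinAt (fun y : ℝ => y⁻¹) (-(x ^ 2)⁻¹) (Ioi 0) x :=
  fun x hx => (hasDerivAt_inv (ne_of_gt hx)).hasDerivWithinAt

lemma key_eq (a b : ℝ) {x : ℝ} (hx : x ∈ Ioi (0:ℝ)) :
    |(-(x ^ 2)⁻¹)| • ((x⁻¹) ^ (-a - 1) * Real.exp (-b / x⁻¹))
      = x ^ (a - 1) * Real.exp (-(b * x)) := by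
  have hx' : (0:ℝ) < x := hx
  rw [smul_eq_mul, abs_neg, abs_inv, abs_pow, abs_of_pos hx', Real.inv_rpow hx'.le,
    div_eq_mul_inv, inv_inv, ← mul_assoc, ← Real.rpow_natCast x 2, ← Real.rpow_neg hx'.le,
    ← Real.rpow_neg hx'.le, ← Real.rpow_add hx']
  norm_num
  congr 1
  ring

lemma master_integrableOn {a b : ℝ} (ha : 0 < a) (hb : 0 < b) :
    IntegrableOn (fun θ : ℝ => θ ^ (-a - 1) * Real.exp (-b / θ)) (Ioi 0) := by
  have hinj : InjOn (fun y : ℝ => y⁻¹) (Ioi 0) := fun u _ v _ h => inv_injective h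
  have base : IntegrableOn (fun x : ℝ => x ^ (a - 1) * Real.exp (-(b * x))) (Ioi 0) := by
    have h0 := integrableOn_rpow_mul_exp_neg_mul_rpow
      (show (-1:ℝ) < a - 1 by linarith) (show (0:ℝ) < 1 by norm_num) hb
    refine h0.congr_fun (fun x hx => ?_) measurableSet_Ioi
    dsimp only
    rw [Real.rpow_one, neg_mul]
  have key := integrableOn_image_iff_integrableOn_abs_deriv_smul measurableSet_Ioi
    inv_hasDeriv hinj (fun θ : ℝ => θ ^ (-a - 1) * Real.exp (-b / θ))
  rw [inv_image_Ioi] at key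
  rw [key]
  exact base.congr_fun (fun x hx => (key_eq a b hx).symm) measurableSet_Ioi

lemma master_integral {a b : ℝ} (ha : 0 < a) (hb : 0 < b) :
    ∫ θ in Ioi (0:ℝ), θ ^ (-a - 1) * Real.exp (-b / θ) = Real.Gamma a / b ^ a := by
  have hinj : InjOn (fun y : ℝ => y⁻¹) (Ioi 0) := fun u _ v _ h => inv_injective h
  have key := integral_image_eq_integral_abs_deriv_smul measurableSet_Ioi
    inv_hasDeriv hinj (fun θ : ℝ => θ ^ (-a - 1) * Real.exp (-b / θ))
  rw [inv_image_Ioi] at key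
  rw [key, setIntegral_congr_fun measurableSet_Ioi (fun x hx => key_eq a b hx),
    Real.integral_rpow_mul_exp_neg_mul_Ioi ha hb, one_div, Real.inv_rpow hb.le,
    inv_mul_eq_div]

lemma dens_nonneg {a b : ℝ} (ha : 0 < a) (hb : 0 < b) {θ : ℝ} (hθ : θ ∈ Ioi (0:ℝ)) :
    0 ≤ dens a b θ := by
  have hθ' : (0:ℝ) < θ := hθ
  exact mul_nonneg (mul_nonneg
    (div_nonneg (Real.rpow_nonneg hb.le a) (Real.Gamma_nonneg_of_nonneg ha.le))
    (Real.rpow_nonneg hθ'.le _)) (Real.exp_nonneg _)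

lemma dens_pos {a b : ℝ} (ha : 0 < a) (hb : 0 < b) {θ : ℝ} (hθ : θ ∈ Ioi (0:ℝ)) :
    0 < dens a b θ := by
  have hθ' : (0:ℝ) < θ := hθ
  exact mul_pos (mul_pos
    (div_pos (Real.rpow_pos_of_pos hb a) (Real.Gamma_pos_of_pos ha))
    (Real.rpow_pos_of_pos hθ' _)) (Real.exp_pos _)

lemma dens_eq (a b θ : ℝ) :
    dens a b θ = b ^ a / Real.Gamma a * (θ ^ (-a - 1) * Real.exp (-b / θ)) :=
  mul_assoc _ _ _

lemma dens_integrableOn {a b : ℝ} (ha : 0 < a) (hb : 0 < b) :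
    IntegrableOn (dens a b) (Ioi 0) := by
  have h := (master_integrableOn ha hb).const_mul (b ^ a / Real.Gamma a)
  exact MeasureTheory.IntegrableOn.congr_fun h (fun x _ => (dens_eq a b x).symm) measurableSet_Ioi

lemma dens_integral {a b : ℝ} (ha : 0 < a) (hb : 0 < b) :
    ∫ θ in Ioi (0:ℝ), dens a b θ = 1 := by
  simp_rw [dens_eq]
  rw [integral_const_mul, master_integral ha hb]
  have h1 : Real.Gamma a ≠ 0 := (Real.Gamma_pos_of_pos ha).ne'
  have h2 : b ^ a ≠ 0 := (Real.rpow_pos_of_pos hb a).ne'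
  field_simp

lemma id_dens_eq {a b : ℝ} {x : ℝ} (hx : x ∈ Ioi (0:ℝ)) :
    x * dens a b x = b ^ a / Real.Gamma a * (x ^ (-(a-1) - 1) * Real.exp (-b / x)) := by
  have hx' : (0:ℝ) < x := hx
  rw [dens_eq, show -(a-1)-1 = (1:ℝ) + (-a-1) by ring, Real.rpow_add hx', Real.rpow_one]
  ring

lemma id_dens_integrableOn {a b : ℝ} (ha : 1 < a) (hb : 0 < b) :
    IntegrableOn (fun θ : ℝ => θ * dens a b θ) (Ioi 0) := by
  have h := (master_integrableOn (show (0:ℝ) < a - 1 by linarith) hb).const_mul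
    (b ^ a / Real.Gamma a)
  exact MeasureTheory.IntegrableOn.congr_fun h (fun x hx => (id_dens_eq hx).symm) measurableSet_Ioi

lemma id_dens_integral {a b : ℝ} (ha : 1 < a) (hb : 0 < b) :
    ∫ θ in Ioi (0:ℝ), θ * dens a b θ = b / (a - 1) := by
  rw [setIntegral_congr_fun measurableSet_Ioi (fun x hx => id_dens_eq (a := a) (b := b) hx),
    integral_const_mul, master_integral (show (0:ℝ) < a - 1 by linarith) hb]
  have hΓ : Real.Gamma a = (a - 1) * Real.Gamma (a - 1) := by
    have h := Real.Gamma_add_one (show a - 1 ≠ 0 by linarith)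
    rw [sub_add_cancel] at h
    exact h
  have hba : b ^ a = b ^ (a - 1) * b := by
    rw [show a = (a - 1) + 1 by ring, Real.rpow_add_one hb.ne']
    ring_nf
  have h1 : Real.Gamma (a - 1) ≠ 0 := (Real.Gamma_pos_of_pos (by linarith)).ne'
  have h2 : b ^ (a-1) ≠ 0 := (Real.rpow_pos_of_pos hb _).ne'
  have h3 : a - 1 ≠ 0 := by linarith
  rw [hΓ, hba]
  field_simp

lemma dens_measurable (a b : ℝ) : Measurable (dens a b) := by
  unfold dens
  exact ((measurable_const.mul (measurable_id.pow_const _)).mul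
    (Real.measurable_exp.comp (measurable_const.div measurable_id)))

lemma ig_apply {a b : ℝ} (ha : 0 < a) (hb : 0 < b) {S : Set ℝ} (hS : MeasurableSet S) :
    invGammaMeasure a b S = ENNReal.ofReal (∫ θ in S ∩ Ioi 0, dens a b θ) := by
  rw [ig_eq, withDensity_apply _ hS, Measure.restrict_restrict hS,
    ← ofReal_integral_eq_lintegral_ofReal]
  · exact (dens_integrableOn ha hb).mono_set inter_subset_right
  · exact (ae_restrict_iff' (hS.inter measurableSet_Ioi)).mpr
      (ae_of_all _ fun x hx => dens_nonneg ha hb hx.2)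

lemma ig_isProbability {a b : ℝ} (ha : 0 < a) (hb : 0 < b) :
    IsProbabilityMeasure (invGammaMeasure a b) := by
  constructor
  rw [ig_apply ha hb MeasurableSet.univ, univ_inter, dens_integral ha hb, ofReal_one]

lemma ig_Ioi {a b : ℝ} (ha : 0 < a) (hb : 0 < b) (c : ℝ) :
    invGammaMeasure a b (Ioi c)
      = ENNReal.ofReal (∫ θ in Ioi (max c 0), dens a b θ) := by
  rw [ig_apply ha hb measurableSet_Ioi, Ioi_inter_Ioi]

lemma ig_Ici {a b : ℝ} (ha : 0 < a) (hb : 0 < b) (c : ℝ) :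
    invGammaMeasure a b (Ici c)
      = ENNReal.ofReal (∫ θ in Ioi (max c 0), dens a b θ) := by
  rw [ig_apply ha hb measurableSet_Ici]
  congr 1
  rcases le_or_gt c 0 with h | h
  · rw [show Ici c ∩ Ioi 0 = Ioi 0 from
      inter_eq_self_of_subset_right (fun x hx => le_trans h (le_of_lt hx)),
      max_eq_right h]
  · rw [show Ici c ∩ Ioi 0 = Ici c from
      inter_eq_self_of_subset_left (Set.Ici_subset_Ioi.mpr h),
      max_eq_left h.le, integral_Ici_eq_integral_Ioi]

lemma tails_mono {p q : ℝ → ℝ}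
    (hpp : ∀ x ∈ Ioi (0:ℝ), 0 < p x) (hqq : ∀ x ∈ Ioi (0:ℝ), 0 < q x)
    (hpi : IntegrableOn p (Ioi 0)) (hqi : IntegrableOn q (Ioi 0))
    (hp1 : ∫ x in Ioi (0:ℝ), p x = 1) (hq1 : ∫ x in Ioi (0:ℝ), q x = 1)
    (hcross : ∀ x y : ℝ, 0 < x → x ≤ y → p x * q y ≤ p y * q x)
    {c : ℝ} (hc : 0 < c) : ∫ x in Ioi c, q x ≤ ∫ x in Ioi c, p x := by
  have hpc := hpp c hc
  have hqc := hqq c hc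
  have hIoiP : IntegrableOn p (Ioi c) := hpi.mono_set (Ioi_subset_Ioi hc.le)
  have hIoiQ : IntegrableOn q (Ioi c) := hqi.mono_set (Ioi_subset_Ioi hc.le)
  have hIocP : IntegrableOn p (Ioc 0 c) := hpi.mono_set Ioc_subset_Ioi_self
  have hIocQ : IntegrableOn q (Ioc 0 c) := hqi.mono_set Ioc_subset_Ioi_self
  rcases le_or_gt (q c) (p c) with hle | hlt
  · apply setIntegral_mono_on hIoiQ hIoiP measurableSet_Ioi
    intro x hx
    have hx0 : (0:ℝ) < x := lt_trans hc hx
    have hpx := hpp x hx0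
    have hqx := hqq x hx0
    have h1 := hcross c x hc (le_of_lt hx)
    have h2 : p x * q c ≤ p x * p c := mul_le_mul_of_nonneg_left hle hpx.le
    have h3 : p c * q x ≤ p c * p x := by
      calc p c * q x ≤ p x * q c := h1
      _ ≤ p x * p c := h2
      _ = p c * p x := mul_comm _ _
    exact le_of_mul_le_mul_left h3 hpc
  · have hpoint : ∀ x ∈ Ioc (0:ℝ) c, p x ≤ q x := by
      intro x hx
      have hpx := hpp x hx.1
      have hqx := hqq x hx.1
      have h1 := hcross x c hx.1 hx.2
      have h2 : p c * q x ≤ q c * q x := mul_le_mul_of_nonneg_right hlt.le hqx.le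
      have h3 : q c * p x ≤ q c * q x := by
        calc q c * p x = p x * q c := mul_comm _ _
        _ ≤ p c * q x := h1
        _ ≤ q c * q x := h2
      exact le_of_mul_le_mul_left h3 hqc
    have hsplitP : (∫ x in Ioc (0:ℝ) c, p x) + ∫ x in Ioi c, p x = 1 := by
      rw [← hp1, ← Ioc_union_Ioi_eq_Ioi hc.le,
        setIntegral_union (Ioc_disjoint_Ioi le_rfl) measurableSet_Ioi hIocP hIoiP]
    have hsplitQ : (∫ x in Ioc (0:ℝ) c, q x) + ∫ x in Ioi c, q x = 1 := by
      rw [← hq1, ← Ioc_union_Ioi_eq_Ioi hc.le,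
        setIntegral_union (Ioc_disjoint_Ioi le_rfl) measurableSet_Ioi hIocQ hIoiQ]
    have hIoc : (∫ x in Ioc (0:ℝ) c, p x) ≤ ∫ x in Ioc (0:ℝ) c, q x :=
      setIntegral_mono_on hIocP hIocQ measurableSet_Ioc hpoint
    linarith

lemma ig_tail_le {a1 b1 a2 b2 : ℝ} (ha1 : 0 < a1) (hb1 : 0 < b1) (ha2 : 0 < a2) (hb2 : 0 < b2)
    (hcross : ∀ x y : ℝ, 0 < x → x ≤ y →
      dens a1 b1 x * dens a2 b2 y ≤ dens a1 b1 y * dens a2 b2 x) :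
    (∀ c, invGammaMeasure a2 b2 (Ioi c) ≤ invGammaMeasure a1 b1 (Ioi c)) ∧
    (∀ c, invGammaMeasure a2 b2 (Ici c) ≤ invGammaMeasure a1 b1 (Ici c)) := by
  have key : ∀ c : ℝ,
      (∫ x in Ioi (max c 0), dens a2 b2 x) ≤ ∫ x in Ioi (max c 0), dens a1 b1 x := by
    intro c
    rcases le_or_gt c 0 with h | h
    · rw [max_eq_right h, dens_integral ha2 hb2, dens_integral ha1 hb1]
    · rw [max_eq_left h.le]
      exact tails_mono (fun x hx => dens_pos ha1 hb1 hx) (fun x hx => dens_pos ha2 hb2 hx)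
        (dens_integrableOn ha1 hb1) (dens_integrableOn ha2 hb2)
        (dens_integral ha1 hb1) (dens_integral ha2 hb2) hcross h
  constructor <;> intro c
  · rw [ig_Ioi ha2 hb2, ig_Ioi ha1 hb1]
    exact ofReal_le_ofReal (key c)
  · rw [ig_Ici ha2 hb2, ig_Ici ha1 hb1]
    exact ofReal_le_ofReal (key c)

lemma cross_shape {a b al : ℝ} (ha : 0 < a) (hb : 0 < b) (hal : 0 < al) :
    ∀ x y : ℝ, 0 < x → x ≤ y →
      dens a b x * dens (a + al) b y ≤ dens a b y * dens (a + al) b x := by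
  intro x y hx hxy
  have hy : 0 < y := lt_of_lt_of_le hx hxy
  have key : x ^ (-a-1) * y ^ (-(a+al)-1) ≤ y ^ (-a-1) * x ^ (-(a+al)-1) := by
    have e1 : y ^ (-(a+al)-1) = y ^ (-a-1) * y ^ (-al) := by
      rw [← Real.rpow_add hy]
      congr 1
      ring
    have e2 : x ^ (-(a+al)-1) = x ^ (-a-1) * x ^ (-al) := by
      rw [← Real.rpow_add hx]
      congr 1
      ring
    have hmono : y ^ (-al) ≤ x ^ (-al) := by
      rw [Real.rpow_neg hx.le, Real.rpow_neg hy.le, ← one_div, ← one_div]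
      exact one_div_le_one_div_of_le (Real.rpow_pos_of_pos hx al)
        (Real.rpow_le_rpow hx.le hxy hal.le)
    rw [e1, e2]
    calc x ^ (-a-1) * (y ^ (-a-1) * y ^ (-al))
        = (x ^ (-a-1) * y ^ (-a-1)) * y ^ (-al) := by ring
      _ ≤ (x ^ (-a-1) * y ^ (-a-1)) * x ^ (-al) :=
          mul_le_mul_of_nonneg_left hmono
            (mul_nonneg (Real.rpow_nonneg hx.le _) (Real.rpow_nonneg hy.le _))
      _ = y ^ (-a-1) * (x ^ (-a-1) * x ^ (-al)) := by ring
  have hC : 0 ≤ b ^ a / Real.Gamma a * (b ^ (a+al) / Real.Gamma (a+al)) *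
      (Real.exp (-b/x) * Real.exp (-b/y)) :=
    mul_nonneg (mul_nonneg
      (div_nonneg (Real.rpow_nonneg hb.le _) (Real.Gamma_nonneg_of_nonneg ha.le))
      (div_nonneg (Real.rpow_nonneg hb.le _) (Real.Gamma_nonneg_of_nonneg (by linarith))))
      (mul_nonneg (Real.exp_nonneg _) (Real.exp_nonneg _))
  unfold dens
  calc b ^ a / Real.Gamma a * x ^ (-a-1) * Real.exp (-b/x) *
        (b ^ (a+al) / Real.Gamma (a+al) * y ^ (-(a+al)-1) * Real.exp (-b/y))
      = (b ^ a / Real.Gamma a * (b ^ (a+al) / Real.Gamma (a+al)) *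
          (Real.exp (-b/x) * Real.exp (-b/y))) * (x ^ (-a-1) * y ^ (-(a+al)-1)) := by ring
    _ ≤ (b ^ a / Real.Gamma a * (b ^ (a+al) / Real.Gamma (a+al)) *
          (Real.exp (-b/x) * Real.exp (-b/y))) * (y ^ (-a-1) * x ^ (-(a+al)-1)) :=
        mul_le_mul_of_nonneg_left key hC
    _ = b ^ a / Real.Gamma a * y ^ (-a-1) * Real.exp (-b/y) *
        (b ^ (a+al) / Real.Gamma (a+al) * x ^ (-(a+al)-1) * Real.exp (-b/x)) := by ring

lemma cross_scale {a b be : ℝ} (ha : 0 < a) (hb : 0 < b) (hbe : 0 < be) :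
    ∀ x y : ℝ, 0 < x → x ≤ y →
      dens a (b + be) x * dens a b y ≤ dens a (b + be) y * dens a b x := by
  intro x y hx hxy
  have hy : 0 < y := lt_of_lt_of_le hx hxy
  have key : Real.exp (-(b+be)/x) * Real.exp (-b/y)
      ≤ Real.exp (-(b+be)/y) * Real.exp (-b/x) := by
    rw [← Real.exp_add, ← Real.exp_add]
    apply Real.exp_le_exp.mpr
    have hinv : 1/y ≤ 1/x := one_div_le_one_div_of_le hx hxy
    have h1 : 0 ≤ be * (1/x - 1/y) := mul_nonneg hbe.le (by linarith)
    have ex : -(b+be)/x = -(b+be) * (1/x) := by ring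
    have ey : -b/y = -b * (1/y) := by ring
    have ex' : -(b+be)/y = -(b+be) * (1/y) := by ring
    have ey' : -b/x = -b * (1/x) := by ring
    rw [ex, ey, ex', ey']
    nlinarith
  have hC : 0 ≤ (b+be) ^ a / Real.Gamma a * (b ^ a / Real.Gamma a) *
      (x ^ (-a-1) * y ^ (-a-1)) :=
    mul_nonneg (mul_nonneg
      (div_nonneg (Real.rpow_nonneg (by linarith) _) (Real.Gamma_nonneg_of_nonneg ha.le))
      (div_nonneg (Real.rpow_nonneg hb.le _) (Real.Gamma_nonneg_of_nonneg ha.le)))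
      (mul_nonneg (Real.rpow_nonneg hx.le _) (Real.rpow_nonneg hy.le _))
  unfold dens
  calc (b+be) ^ a / Real.Gamma a * x ^ (-a-1) * Real.exp (-(b+be)/x) *
        (b ^ a / Real.Gamma a * y ^ (-a-1) * Real.exp (-b/y))
      = ((b+be) ^ a / Real.Gamma a * (b ^ a / Real.Gamma a) * (x ^ (-a-1) * y ^ (-a-1))) *
          (Real.exp (-(b+be)/x) * Real.exp (-b/y)) := by ring
    _ ≤ ((b+be) ^ a / Real.Gamma a * (b ^ a / Real.Gamma a) * (x ^ (-a-1) * y ^ (-a-1))) *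
          (Real.exp (-(b+be)/y) * Real.exp (-b/x)) := mul_le_mul_of_nonneg_left key hC
    _ = (b+be) ^ a / Real.Gamma a * y ^ (-a-1) * Real.exp (-(b+be)/y) *
        (b ^ a / Real.Gamma a * x ^ (-a-1) * Real.exp (-b/x)) := by ring

lemma upper_set_meas {P Q : Measure ℝ} [IsProbabilityMeasure P] [IsProbabilityMeasure Q]
    (hIoi : ∀ c, Q (Ioi c) ≤ P (Ioi c)) (hIci : ∀ c, Q (Ici c) ≤ P (Ici c))
    {S : Set ℝ} (hS : ∀ ⦃u v : ℝ⦄, u ∈ S → u ≤ v → v ∈ S) : Q S ≤ P S := by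
  rcases eq_empty_or_nonempty S with rfl | hne
  · simp
  by_cases hbd : BddBelow S
  · have h2 : S ⊆ Ici (sInf S) := fun u hu => csInf_le hbd hu
    by_cases hcS : sInf S ∈ S
    · have hSeq : S = Ici (sInf S) := Subset.antisymm h2 (fun u hu => hS hcS hu)
      rw [hSeq]
      exact hIci _
    · have hSeq : S = Ioi (sInf S) := by
        apply Subset.antisymm
        · intro u hu
          exact lt_of_le_of_ne (mem_Ici.mp (h2 hu)) fun he => hcS (he ▸ hu)
        · intro u hu
          obtain ⟨v, hvS, hvu⟩ := (csInf_lt_iff hbd hne).mp hu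
          exact hS hvS hvu.le
      rw [hSeq]
      exact hIoi _
  · have hSeq : S = univ := by
      apply eq_univ_of_forall
      intro u
      obtain ⟨v, hvS, hvu⟩ := not_bddBelow_iff.mp hbd u
      exact hS hvS hvu.le
    rw [hSeq, measure_univ, measure_univ]

lemma lower_set_meas {P Q : Measure ℝ} [IsProbabilityMeasure P] [IsProbabilityMeasure Q]
    (hIoi : ∀ c, Q (Ioi c) ≤ P (Ioi c)) (hIci : ∀ c, Q (Ici c) ≤ P (Ici c))
    {S : Set ℝ} (hS : ∀ ⦃u v : ℝ⦄, u ∈ S → v ≤ u → v ∈ S) (hSm : MeasurableSet S) :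
    P S ≤ Q S := by
  have hupper : ∀ ⦃u v : ℝ⦄, u ∈ Sᶜ → u ≤ v → v ∈ Sᶜ :=
    fun u v hu huv hv => hu (hS hv huv)
  have h := upper_set_meas hIoi hIci hupper
  have hP : P Sᶜ = 1 - P S := prob_compl_eq_one_sub hSm
  have hQ : Q Sᶜ = 1 - Q S := prob_compl_eq_one_sub hSm
  have h2 : (1:ℝ≥0∞) - P Sᶜ ≤ 1 - Q Sᶜ := tsub_le_tsub_left h 1
  rwa [hP, hQ, ENNReal.sub_sub_cancel ENNReal.one_ne_top prob_le_one,
    ENNReal.sub_sub_cancel ENNReal.one_ne_top prob_le_one] at h2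

lemma layercake_helper (μ : Measure ℝ) {f : ℝ → ℝ} (hf : Measurable f)
    (hint : Integrable f μ) :
    (∫ a, ((f a).toNNReal : ℝ) ∂μ = (∫⁻ t in Ioi 0, μ {a | t < f a}).toReal) ∧
      (∫⁻ t in Ioi 0, μ {a | t < f a}) ≠ ⊤ := by
  have hnn : ∀ a, 0 ≤ ((f a).toNNReal : ℝ) := fun a => NNReal.coe_nonneg _
  have hmeas : Measurable fun a => ((f a).toNNReal : ℝ) :=
    measurable_coe_nnreal_real.comp hf.real_toNNReal
  have hint2 : Integrable (fun a => ((f a).toNNReal : ℝ)) μ := by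
    have h := hint.pos_part
    refine h.congr (ae_of_all _ fun a => ?_)
    simpa using (Real.coe_toNNReal' (f a)).symm
  have key : ∫⁻ a, ENNReal.ofReal (((f a).toNNReal : ℝ)) ∂μ
      = ∫⁻ t in Ioi 0, μ {a | t < f a} := by
    rw [lintegral_eq_lintegral_meas_lt μ (ae_of_all _ hnn) hmeas.aemeasurable]
    refine setLIntegral_congr_fun measurableSet_Ioi (fun t ht => ?_)
    congr 1
    ext a
    rw [mem_setOf_eq, mem_setOf_eq, Real.coe_toNNReal', lt_sup_iff]
    exact ⟨fun h' => h'.resolve_right (lt_asymm ht), Or.inl⟩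
  constructor
  · rw [integral_eq_lintegral_of_nonneg_ae (ae_of_all _ hnn) hmeas.aestronglyMeasurable, key]
  · rw [← key]
    exact hint2.lintegral_lt_top.ne

lemma integral_mono_stoch {P Q : Measure ℝ} [IsProbabilityMeasure P] [IsProbabilityMeasure Q]
    (hIoi : ∀ c, Q (Ioi c) ≤ P (Ioi c)) (hIci : ∀ c, Q (Ici c) ≤ P (Ici c))
    {g : ℝ → ℝ} (hg : Monotone g) (hgP : Integrable g P) (hgQ : Integrable g Q) :
    ∫ a, g a ∂Q ≤ ∫ a, g a ∂P := by
  have hgm : Measurable g := hg.measurable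
  obtain ⟨eqPp, finPp⟩ := layercake_helper P hgm hgP
  obtain ⟨eqQp, finQp⟩ := layercake_helper Q hgm hgQ
  obtain ⟨eqPn, finPn⟩ := layercake_helper P hgm.neg hgP.neg
  obtain ⟨eqQn, finQn⟩ := layercake_helper Q hgm.neg hgQ.neg
  have hpos : (∫⁻ t in Ioi 0, Q {a | t < g a}) ≤ ∫⁻ t in Ioi 0, P {a | t < g a} := by
    apply lintegral_mono
    intro t
    exact upper_set_meas hIoi hIci fun u v hu huv => lt_of_lt_of_le hu (hg huv)
  have hneg : (∫⁻ t in Ioi 0, P {a | t < -g a}) ≤ ∫⁻ t in Ioi 0, Q {a | t < -g a} := by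
    apply lintegral_mono
    intro t
    refine lower_set_meas hIoi hIci
      (fun u v hu hvu => lt_of_lt_of_le hu (neg_le_neg (hg hvu))) ?_
    have : {a : ℝ | t < -g a} = g ⁻¹' (Iio (-t)) := by
      ext a
      simp only [mem_setOf_eq, mem_preimage, mem_Iio]
      constructor <;> intro h' <;> linarith
    rw [this]
    exact hgm measurableSet_Iio
  have h1 : ∫ a, ((g a).toNNReal : ℝ) ∂Q ≤ ∫ a, ((g a).toNNReal : ℝ) ∂P := by
    rw [eqQp, eqPp]
    exact ENNReal.toReal_le_toReal finQp finPp |>.mpr hpos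
  have h2 : ∫ a, ((-g a).toNNReal : ℝ) ∂P ≤ ∫ a, ((-g a).toNNReal : ℝ) ∂Q := by
    simp only [Pi.neg_apply] at eqPn eqQn finPn finQn
    rw [eqPn, eqQn]
    exact ENNReal.toReal_le_toReal finPn finQn |>.mpr hneg
  rw [integral_eq_integral_pos_part_sub_integral_neg_part hgQ,
    integral_eq_integral_pos_part_sub_integral_neg_part hgP]
  linarith

lemma ig_integral {a b : ℝ} (ha : 0 < a) (hb : 0 < b) (f : ℝ → ℝ) :
    ∫ θ, f θ ∂(invGammaMeasure a b) = ∫ θ in Ioi (0:ℝ), f θ * dens a b θ := by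
  rw [ig_eq]
  have he : (fun θ => ENNReal.ofReal (dens a b θ))
      = fun θ => (((dens a b θ).toNNReal : ℝ≥0) : ℝ≥0∞) := rfl
  rw [he, integral_withDensity_eq_integral_smul (dens_measurable a b).real_toNNReal f]
  refine setIntegral_congr_fun measurableSet_Ioi (fun θ hθ => ?_)
  rw [NNReal.smul_def, smul_eq_mul, Real.coe_toNNReal _ (dens_nonneg ha hb hθ), mul_comm]

lemma ig_mean {a b : ℝ} (ha : 1 < a) (hb : 0 < b) :
    ∫ θ, θ ∂(invGammaMeasure a b) = b / (a - 1) := by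
  rw [ig_integral (by linarith) hb (fun θ => θ), id_dens_integral ha hb]

lemma ig_int_lip {a b : ℝ} (ha : 1 < a) (hb : 0 < b) (K : ℝ≥0) (f : ℝ → ℝ)
    (hf : LipschitzWith K f) : Integrable f (invGammaMeasure a b) := by
  have ha0 : (0:ℝ) < a := by linarith
  rw [ig_eq, integrable_withDensity_iff ((dens_measurable a b).ennreal_ofReal)
    (ae_of_all _ fun θ => ENNReal.ofReal_lt_top)]
  have hbound : IntegrableOn
      (fun θ : ℝ => |f 0| * dens a b θ + (K : ℝ) * (θ * dens a b θ)) (Ioi 0) :=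
    ((dens_integrableOn ha0 hb).const_mul _).add ((id_dens_integrableOn ha hb).const_mul _)
  apply Integrable.mono' hbound
  · exact (hf.continuous.measurable.mul
      ((dens_measurable a b).ennreal_ofReal.ennreal_toReal)).aestronglyMeasurable
  · rw [ae_restrict_iff' measurableSet_Ioi]
    refine ae_of_all _ fun θ hθ => ?_
    have hθ' : (0:ℝ) < θ := hθ
    have hd := dens_nonneg ha0 hb hθ
    rw [ENNReal.toReal_ofReal hd, Real.norm_eq_abs, abs_mul, abs_of_nonneg hd]
    have h1 : |f θ| ≤ |f 0| + (K : ℝ) * θ := by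
      have h2 := hf.dist_le_mul θ 0
      rw [Real.dist_eq, Real.dist_eq, sub_zero] at h2
      have h3 : |f θ| - |f 0| ≤ |f θ - f 0| := abs_sub_abs_le_abs_sub _ _
      have h4 : |θ| = θ := abs_of_pos hθ'
      rw [h4] at h2
      linarith
    calc |f θ| * dens a b θ ≤ (|f 0| + (K : ℝ) * θ) * dens a b θ :=
        mul_le_mul_of_nonneg_right h1 hd
      _ = |f 0| * dens a b θ + (K : ℝ) * (θ * dens a b θ) := by ring

lemma bridge {P Q : Measure ℝ} [IsProbabilityMeasure P] [IsProbabilityMeasure Q]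
    (hIoi : ∀ c, Q (Ioi c) ≤ P (Ioi c)) (hIci : ∀ c, Q (Ici c) ≤ P (Ici c))
    (hPL : ∀ (K : ℝ≥0) (f : ℝ → ℝ), LipschitzWith K f → Integrable f P)
    (hQL : ∀ (K : ℝ≥0) (f : ℝ → ℝ), LipschitzWith K f → Integrable f Q)
    {h : ℝ → ℝ} (hL : LipschitzWith 1 h) :
    |(∫ θ, h θ ∂P) - ∫ θ, h θ ∂Q| ≤ (∫ θ, θ ∂P) - ∫ θ, θ ∂Q := by
  have hid : LipschitzWith 1 (fun θ : ℝ => θ) := LipschitzWith.id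
  have habs : ∀ u v : ℝ, u ≤ v → |h v - h u| ≤ v - u := by
    intro u v huv
    have h2 := hL.dist_le_mul v u
    rw [Real.dist_eq, Real.dist_eq] at h2
    rw [NNReal.coe_one, one_mul] at h2
    rwa [show |v - u| = v - u from abs_of_nonneg (by linarith)] at h2
  have hg1 : Monotone (fun θ : ℝ => θ - h θ) := by
    intro u v huv
    have := (abs_le.mp (habs u v huv)).2
    simp only
    linarith
  have hg2 : Monotone (fun θ : ℝ => θ + h θ) := by
    intro u v huv
    have := (abs_le.mp (habs u v huv)).1
    simp only
    linarith
  have hL1 : LipschitzWith 2 (fun θ : ℝ => θ - h θ) := by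
    apply LipschitzWith.of_dist_le_mul
    intro u v
    have h2 := hL.dist_le_mul u v
    rw [Real.dist_eq, Real.dist_eq, NNReal.coe_one, one_mul] at h2
    rw [Real.dist_eq, Real.dist_eq]
    push_cast
    calc |u - h u - (v - h v)| = |(u - v) + -(h u - h v)| := by
          rw [show u - h u - (v - h v) = (u - v) + -(h u - h v) by ring]
      _ ≤ |u - v| + |-(h u - h v)| := abs_add_le _ _
      _ = |u - v| + |h u - h v| := by rw [abs_neg]
      _ ≤ 2 * |u - v| := by linarith
  have hL2 : LipschitzWith 2 (fun θ : ℝ => θ + h θ) := by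
    apply LipschitzWith.of_dist_le_mul
    intro u v
    have h2 := hL.dist_le_mul u v
    rw [Real.dist_eq, Real.dist_eq, NNReal.coe_one, one_mul] at h2
    rw [Real.dist_eq, Real.dist_eq]
    push_cast
    calc |u + h u - (v + h v)| = |(u - v) + (h u - h v)| := by
          rw [show u + h u - (v + h v) = (u - v) + (h u - h v) by ring]
      _ ≤ |u - v| + |h u - h v| := abs_add_le _ _
      _ ≤ 2 * |u - v| := by linarith
  have e1 : ∫ θ, (θ - h θ) ∂Q ≤ ∫ θ, (θ - h θ) ∂P :=
    integral_mono_stoch hIoi hIci hg1 (hPL 2 _ hL1) (hQL 2 _ hL1)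
  have e2 : ∫ θ, (θ + h θ) ∂Q ≤ ∫ θ, (θ + h θ) ∂P :=
    integral_mono_stoch hIoi hIci hg2 (hPL 2 _ hL2) (hQL 2 _ hL2)
  rw [integral_sub (hPL 1 _ hid) (hPL 1 h hL),
    integral_sub (hQL 1 _ hid) (hQL 1 h hL)] at e1
  rw [integral_add (hPL 1 _ hid) (hPL 1 h hL),
    integral_add (hQL 1 _ hid) (hQL 1 h hL)] at e2
  apply abs_le.mpr
  constructor <;> linarith

end IGAux

/-- Bounds on the Wasserstein-1 distance between the posteriors for the normal variance
`σ²` (with known mean `μ`) under the Jeffreys prior `∝ 1/σ²` and under an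
`InverseGamma(α, β)` prior (Ghaderinezhad–Ley 2019). -/
theorem wasserstein_invGamma_vs_jeffreys_normal
    (n : ℕ) (hn : 2 < n) (μ : ℝ) (x : Fin n → ℝ)
    (s : ℝ) (hs : s = ∑ i, (x i - μ) ^ 2) (hspos : 0 < s)
    (α β : ℝ) (hα : 0 < α) (hβ : 0 < β) :
    ENNReal.ofReal
        (|α / 2 * s - ((n : ℝ) / 2 - 1) * β| /
          (((n : ℝ) / 2 + α - 1) * ((n : ℝ) / 2 - 1))) ≤
      wassersteinDist (invGammaMeasure ((n : ℝ) / 2) (s / 2))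
        (invGammaMeasure ((n : ℝ) / 2 + α) (s / 2 + β)) ∧
    wassersteinDist (invGammaMeasure ((n : ℝ) / 2) (s / 2))
        (invGammaMeasure ((n : ℝ) / 2 + α) (s / 2 + β)) ≤
      ENNReal.ofReal
        ((α / 2 * s + (n : ℝ) * β / 2 + β * (2 * α - 1)) /
          (((n : ℝ) / 2 + α - 1) * ((n : ℝ) / 2 - 1))) := by
  have hn' : (2:ℝ) < n := by exact_mod_cast hn
  have hA1 : 1 < (n:ℝ)/2 := by linarith
  have hA2 : 1 < (n:ℝ)/2 + α := by linarith
  have hs2 : 0 < s/2 := by linarith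
  have hsb : 0 < s/2 + β := by linarith
  haveI iP1 : IsProbabilityMeasure (invGammaMeasure ((n:ℝ)/2) (s/2)) :=
    IGAux.ig_isProbability (by linarith) hs2
  haveI iP2 : IsProbabilityMeasure (invGammaMeasure ((n:ℝ)/2 + α) (s/2 + β)) :=
    IGAux.ig_isProbability (by linarith) hsb
  haveI iQ : IsProbabilityMeasure (invGammaMeasure ((n:ℝ)/2 + α) (s/2)) :=
    IGAux.ig_isProbability (by linarith) hs2
  have hD : 0 < ((n:ℝ)/2 + α - 1) * ((n:ℝ)/2 - 1) := mul_pos (by linarith) (by linarith)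
  constructor
  · unfold wassersteinDist
    refine le_iSup₂_of_le (fun θ : ℝ => θ) LipschitzWith.id ?_
    apply ENNReal.ofReal_le_ofReal
    rw [IGAux.ig_mean hA1 hs2, IGAux.ig_mean hA2 hsb]
    have key : (s/2)/((n:ℝ)/2 - 1) - (s/2 + β)/((n:ℝ)/2 + α - 1)
        = (α/2 * s - ((n:ℝ)/2 - 1)*β) / (((n:ℝ)/2 + α - 1) * ((n:ℝ)/2 - 1)) := by
      have d1 : ((n:ℝ)/2 - 1) ≠ 0 := by linarith
      have d2 : ((n:ℝ)/2 + α - 1) ≠ 0 := by linarith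
      rw [div_sub_div _ _ d1 d2, div_eq_div_iff (mul_ne_zero d1 d2) hD.ne']
      ring
    rw [key, abs_div, abs_of_pos hD]
  · unfold wassersteinDist
    apply iSup₂_le
    intro h hL
    apply ENNReal.ofReal_le_ofReal
    have t1 := IGAux.ig_tail_le (show (0:ℝ) < (n:ℝ)/2 by linarith) hs2
      (show (0:ℝ) < (n:ℝ)/2 + α by linarith) hs2
      (IGAux.cross_shape (by linarith) hs2 hα)
    have t2 := IGAux.ig_tail_le (show (0:ℝ) < (n:ℝ)/2 + α by linarith) hsb
      (show (0:ℝ) < (n:ℝ)/2 + α by linarith) hs2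
      (IGAux.cross_scale (by linarith) hs2 hβ)
    have ilP1 : ∀ (K : NNReal) (f : ℝ → ℝ), LipschitzWith K f →
        Integrable f (invGammaMeasure ((n:ℝ)/2) (s/2)) :=
      fun K f hf => IGAux.ig_int_lip hA1 hs2 K f hf
    have ilP2 : ∀ (K : NNReal) (f : ℝ → ℝ), LipschitzWith K f →
        Integrable f (invGammaMeasure ((n:ℝ)/2 + α) (s/2 + β)) :=
      fun K f hf => IGAux.ig_int_lip hA2 hsb K f hf
    have ilQ : ∀ (K : NNReal) (f : ℝ → ℝ), LipschitzWith K f →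
        Integrable f (invGammaMeasure ((n:ℝ)/2 + α) (s/2)) :=
      fun K f hf => IGAux.ig_int_lip hA2 hs2 K f hf
    have b1 := IGAux.bridge t1.1 t1.2 ilP1 ilQ hL
    have b2 := IGAux.bridge t2.1 t2.2 ilP2 ilQ hL
    rw [IGAux.ig_mean hA1 hs2, IGAux.ig_mean hA2 hs2] at b1
    rw [IGAux.ig_mean hA2 hsb, IGAux.ig_mean hA2 hs2] at b2
    have tri : |(∫ θ, h θ ∂(invGammaMeasure ((n:ℝ)/2) (s/2)))
          - ∫ θ, h θ ∂(invGammaMeasure ((n:ℝ)/2 + α) (s/2 + β))|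
        ≤ |(∫ θ, h θ ∂(invGammaMeasure ((n:ℝ)/2) (s/2)))
            - ∫ θ, h θ ∂(invGammaMeasure ((n:ℝ)/2 + α) (s/2))|
          + |(∫ θ, h θ ∂(invGammaMeasure ((n:ℝ)/2 + α) (s/2 + β)))
            - ∫ θ, h θ ∂(invGammaMeasure ((n:ℝ)/2 + α) (s/2))| := by
      have htri := abs_sub_le (∫ θ, h θ ∂(invGammaMeasure ((n:ℝ)/2) (s/2)))
        (∫ θ, h θ ∂(invGammaMeasure ((n:ℝ)/2 + α) (s/2)))
        (∫ θ, h θ ∂(invGammaMeasure ((n:ℝ)/2 + α) (s/2 + β)))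
      rwa [abs_sub_comm (∫ θ, h θ ∂(invGammaMeasure ((n:ℝ)/2 + α) (s/2)))
        (∫ θ, h θ ∂(invGammaMeasure ((n:ℝ)/2 + α) (s/2 + β)))] at htri
    have hfinal : (s/2)/((n:ℝ)/2 - 1) - (s/2)/((n:ℝ)/2 + α - 1)
          + ((s/2 + β)/((n:ℝ)/2 + α - 1) - (s/2)/((n:ℝ)/2 + α - 1))
        ≤ (α/2*s + (n:ℝ)*β/2 + β*(2*α-1)) / (((n:ℝ)/2 + α - 1) * ((n:ℝ)/2 - 1)) := by
      have e : (s/2)/((n:ℝ)/2 - 1) - (s/2)/((n:ℝ)/2 + α - 1)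
            + ((s/2 + β)/((n:ℝ)/2 + α - 1) - (s/2)/((n:ℝ)/2 + α - 1))
          = (α/2*s + β*((n:ℝ)/2 - 1)) / (((n:ℝ)/2 + α - 1) * ((n:ℝ)/2 - 1)) := by
        have d1 : ((n:ℝ)/2 - 1) ≠ 0 := by linarith
        have d2 : ((n:ℝ)/2 + α - 1) ≠ 0 := by linarith
        rw [show (s/2 + β)/((n:ℝ)/2 + α - 1) - (s/2)/((n:ℝ)/2 + α - 1)
            = β/((n:ℝ)/2 + α - 1) by rw [div_sub_div_same, add_sub_cancel_left],
          div_sub_div _ _ d1 d2, div_add_div _ _ (mul_ne_zero d1 d2) d2,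
          div_eq_div_iff (mul_ne_zero (mul_ne_zero d1 d2) d2) hD.ne']
        ring
      rw [e]
      apply (div_le_div_iff_of_pos_right hD).mpr
      nlinarith [mul_pos hα hβ]
    calc |(∫ θ, h θ ∂(invGammaMeasure ((n:ℝ)/2) (s/2)))
          - ∫ θ, h θ ∂(invGammaMeasure ((n:ℝ)/2 + α) (s/2 + β))|
        ≤ |(∫ θ, h θ ∂(invGammaMeasure ((n:ℝ)/2) (s/2)))
            - ∫ θ, h θ ∂(invGammaMeasure ((n:ℝ)/2 + α) (s/2))|
          + |(∫ θ, h θ ∂(invGammaMeasure ((n:ℝ)/2 + α) (s/2 + β)))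
            - ∫ θ, h θ ∂(invGammaMeasure ((n:ℝ)/2 + α) (s/2))| := tri
      _ ≤ (s/2/((n:ℝ)/2 - 1) - s/2/((n:ℝ)/2 + α - 1))
          + ((s/2 + β)/((n:ℝ)/2 + α - 1) - s/2/((n:ℝ)/2 + α - 1)) := add_le_add b1 b2
      _ ≤ (α/2*s + (n:ℝ)*β/2 + β*(2*α-1)) / (((n:ℝ)/2 + α - 1) * ((n:ℝ)/2 - 1)) := hfinal
end
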